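/- arXiv:2001.03958 — 7 statements merged into one kernel-verified Lean document; each statement's English description precedes it below -/
import Mathlib

section
/- Let S be a nonempty convex subset of ℝ^k and g : S → ℝ a concave function. Define W(x) = sup{g(a) + a·x : a ∈ S} for x ∈ ℝ^k and G(a) = inf{W(x) - a·x : x ∈ ℝ^k} for a ∈ S. Then G(a) = g(a) for every a in the relative interior of S. -/
/-!
At a point `a` of the relative interior, the concave function `g` has a supergradient `φ`:
`g b ≤ g a + φ (b - a)` on `S`. For the vector `x` representing `-φ` this says that the supremum
defining `W x` is attained at `a`, so `G a ≤ W x - ⟪a, x⟫ = g a`; the inequality `g a ≤ G a`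
holds for every `a ∈ S`.

The supergradient at an interior point comes from separating `(a, g a)` from the hypograph; the
separating functional is not vertical because a nonzero linear functional has no local maximum.
Composing with an affine retraction onto `affineSpan ℝ S` reduces the relative interior to this
case.
-/

open Set Filter Topology
open scoped RealInnerProductSpace

theorem AffineSubspace.exists_affineMap_retraction {k E : Type*} [Field k] [AddCommGroup E]
    [Module k E] (s : AffineSubspace k E) {a : E} (ha : a ∈ s) :
    ∃ L : E →ᵃ[k] E, (∀ x, L x ∈ s) ∧ ∀ x ∈ s, L x = x := by
  obtain ⟨q, hq⟩ := s.direction.exists_isCompl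
  set P := s.direction.projection q hq
  refine ⟨AffineMap.mk' (fun x ↦ P (x - a) + a) P a fun x ↦ by simp, fun x ↦ ?_, fun x hx ↦ ?_⟩
  · exact s.vadd_mem_of_mem_direction (Submodule.projection_apply_mem hq _) ha
  · have hxa : x - a ∈ s.direction := s.vsub_mem_direction hx ha
    change P (x - a) + a = x
    rw [Submodule.projection_apply_of_mem_left hq hxa, sub_add_cancel]

section Hypograph

variable {E : Type*} [TopologicalSpace E] {C : Set E} {f : E → ℝ} {a : E}

theorem mk_mem_interior_hypograph (hC : C ∈ 𝓝 a) (hf : ContinuousAt f a) {t : ℝ}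
    (ht : t < f a) : (a, t) ∈ interior {p : E × ℝ | p.1 ∈ C ∧ p.2 ≤ f p.1} := by
  obtain ⟨m, htm, hma⟩ := exists_between ht
  rw [mem_interior_iff_mem_nhds, nhds_prod_eq]
  filter_upwards [prod_mem_prod (inter_mem hC (hf.eventually (lt_mem_nhds hma)))
    (gt_mem_nhds htm)] with p ⟨⟨hpC, hpf⟩, hpt⟩
  exact ⟨hpC, hpt.le.trans hpf.le⟩

theorem mk_apply_notMem_interior_hypograph :
    (a, f a) ∉ interior {p : E × ℝ | p.1 ∈ C ∧ p.2 ≤ f p.1} := by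
  intro h
  have hline : ∀ᶠ t in 𝓝 (f a), (a, t) ∈ {p : E × ℝ | p.1 ∈ C ∧ p.2 ≤ f p.1} :=
    (Continuous.prodMk_right a).continuousAt.eventually (mem_interior_iff_mem_nhds.1 h)
  obtain ⟨t, ht, hat⟩ :=
    ((hline.filter_mono nhdsWithin_le_nhds).and (self_mem_nhdsWithin (s := Ioi (f a)))).exists
  exact (not_le.2 (mem_Ioi.1 hat)) ht.2

end Hypograph

theorem ContinuousLinearMap.eq_zero_of_isLocalMax {E : Type*} [NormedAddCommGroup E]
    [NormedSpace ℝ E] {ψ : E →L[ℝ] ℝ} {a : E} (h : IsLocalMax ψ a) : ψ = 0 := by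
  simpa using h.fderiv_eq_zero

section Supergradient

variable {E : Type*} [NormedAddCommGroup E] [NormedSpace ℝ E] [FiniteDimensional ℝ E]
  {S : Set E} {f : E → ℝ} {a : E}

theorem ConcaveOn.exists_le_add_of_mem_interior (hf : ConcaveOn ℝ S f) (ha : a ∈ interior S) :
    ∃ φ : E →L[ℝ] ℝ, ∀ b ∈ S, f b ≤ f a + φ (b - a) := by
  have hSa : S ∈ 𝓝 a := mem_interior_iff_mem_nhds.1 ha
  have hfa : ContinuousAt f a :=
    hf.continuousOn_interior.continuousAt (isOpen_interior.mem_nhds ha)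
  obtain ⟨Φ, hΦ, hmax⟩ := geometric_hahn_banach_of_nonempty_interior_point hf.convex_hypograph
    mk_apply_notMem_interior_hypograph ⟨_, mk_mem_interior_hypograph hSa hfa (sub_one_lt (f a))⟩
  set ψ := Φ.comp (ContinuousLinearMap.inl ℝ E ℝ)
  set c := Φ (0, 1)
  have hΦ_apply (x : E) (t : ℝ) : Φ (x, t) = ψ x + t * c := by
    rw [← add_zero x, ← zero_add t, ← Prod.mk_add_mk, map_add, ← mul_one t, ← smul_eq_mul,
      ← Prod.smul_zero_mk, map_smul]
    simp [ψ, c]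
  have hmax' : ∀ b ∈ S, ψ b + f b * c ≤ ψ a + f a * c := fun b hb ↦ by
    simpa only [hΦ_apply] using hmax (b, f b) ⟨hb, le_rfl⟩
  have hc : 0 < c := by
    refine lt_of_le_of_ne ?_ fun hc0 ↦ hΦ ?_
    · have := hmax (a, f a - 1) ⟨mem_of_mem_nhds hSa, by linarith⟩
      rw [hΦ_apply, hΦ_apply] at this
      linarith
    · have hψ : ψ = 0 := ContinuousLinearMap.eq_zero_of_isLocalMax <|
        mem_of_superset hSa fun b hb ↦ by simpa [← hc0] using hmax' b hb
      exact ContinuousLinearMap.ext fun ⟨x, t⟩ ↦ by simp [hΦ_apply, hψ, ← hc0]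
  refine ⟨-c⁻¹ • ψ, fun b hb ↦ ?_⟩
  have hslope : c⁻¹ * (ψ b - ψ a) ≤ f a - f b := by
    rw [inv_mul_le_iff₀ hc]
    linarith [hmax' b hb]
  simp only [FunLike.coe_smul, Pi.smul_apply, map_sub, smul_eq_mul]
  linarith

end Supergradient

section IntrinsicInterior

variable {E : Type*} [NormedAddCommGroup E] [NormedSpace ℝ E] [FiniteDimensional ℝ E]
  {S : Set E} {a : E}

theorem mem_interior_preimage_of_mem_intrinsicInterior {L : E →ᵃ[ℝ] E}
    (hL : ∀ x, L x ∈ affineSpan ℝ S) (hLa : L a = a) (ha : a ∈ intrinsicInterior ℝ S) :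
    a ∈ interior (L ⁻¹' S) := by
  obtain ⟨y, hy, rfl⟩ := mem_intrinsicInterior.1 ha
  let M : E → affineSpan ℝ S := fun x ↦ ⟨L x, hL x⟩
  have hM : Continuous M := L.continuous_of_finiteDimensional.subtype_mk hL
  refine mem_interior.2 ⟨M ⁻¹' interior (Subtype.val ⁻¹' S), fun _ hx ↦ interior_subset (s := Subtype.val ⁻¹' S) hx,
    isOpen_interior.preimage hM, ?_⟩
  rwa [mem_preimage, show M y = y from Subtype.ext hLa]

theorem ConcaveOn.exists_le_add_of_mem_intrinsicInterior {f : E → ℝ} (hf : ConcaveOn ℝ S f)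
    (ha : a ∈ intrinsicInterior ℝ S) : ∃ φ : E →L[ℝ] ℝ, ∀ b ∈ S, f b ≤ f a + φ (b - a) := by
  obtain ⟨L, hL, hLfix⟩ := (affineSpan ℝ S).exists_affineMap_retraction
    (subset_affineSpan ℝ S (intrinsicInterior_subset ha))
  have hLS (b : E) (hb : b ∈ S) : L b = b := hLfix b (subset_affineSpan ℝ S hb)
  have hLa : L a = a := hLS a (intrinsicInterior_subset ha)
  obtain ⟨φ, hφ⟩ := (hf.comp_affineMap L).exists_le_add_of_mem_interior
    (mem_interior_preimage_of_mem_intrinsicInterior hL hLa ha)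
  refine ⟨φ, fun b hb ↦ ?_⟩
  have hb' : b ∈ L ⁻¹' S := by rwa [mem_preimage, hLS b hb]
  simpa only [Function.comp_apply, hLS b hb, hLa] using hφ b hb'

end IntrinsicInterior

theorem legendre_double_transform_concave_general
    {k : ℕ} (S : Set (EuclideanSpace ℝ (Fin k)))
    (g : EuclideanSpace ℝ (Fin k) → ℝ) (hg : ConcaveOn ℝ S g)
    (W : EuclideanSpace ℝ (Fin k) → EReal)
    (hW : ∀ x, W x = ⨆ a ∈ S, ((g a + ⟪a, x⟫ : ℝ) : EReal))
    (G : EuclideanSpace ℝ (Fin k) → EReal)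
    (hG : ∀ a, G a = ⨅ x, W x - ((⟪a, x⟫ : ℝ) : EReal)) :
    ∀ a ∈ intrinsicInterior ℝ S, G a = (g a : EReal) := by
  intro a ha
  obtain ⟨φ, hφ⟩ := hg.exists_le_add_of_mem_intrinsicInterior ha
  set v := (InnerProductSpace.toDual ℝ _).symm φ
  have hv (b : EuclideanSpace ℝ (Fin k)) : ⟪b, v⟫ = φ b := by
    rw [real_inner_comm]
    exact InnerProductSpace.toDual_symm_apply
  rw [hG]
  refine le_antisymm ((iInf_le _ (-v)).trans (EReal.sub_le_of_le_add ?_)) (le_iInf fun x ↦ ?_)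
  · rw [hW, ← EReal.coe_add]
    refine iSup₂_le fun b hb ↦ EReal.coe_le_coe_iff.2 ?_
    rw [inner_neg_right, inner_neg_right, hv, hv]
    linarith [hφ b hb, map_sub φ b a]
  · rw [EReal.le_sub_iff_add_le (.inl (EReal.coe_ne_bot _)) (.inl (EReal.coe_ne_top _)), hW,
      ← EReal.coe_add]
    exact le_iSup₂_of_le a (intrinsicInterior_subset ha) le_rfl

/-- Double Legendre-type transform of a concave function on a convex set `S ⊆ ℝ^k`
recovers the function on the relative interior of `S` (Feng–Huang, Rockafellar). -/
theorem legendre_double_transform_concave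
    {k : ℕ} (S : Set (EuclideanSpace ℝ (Fin k))) (hS : S.Nonempty)
    (hconv : Convex ℝ S)
    (g : EuclideanSpace ℝ (Fin k) → ℝ) (hg : ConcaveOn ℝ S g)
    (W : EuclideanSpace ℝ (Fin k) → EReal)
    (hW : ∀ x, W x = ⨆ a ∈ S, ((g a + ⟪a, x⟫ : ℝ) : EReal))
    (G : EuclideanSpace ℝ (Fin k) → EReal)
    (hG : ∀ a, G a = ⨅ x, W x - ((⟪a, x⟫ : ℝ) : EReal)) :
    ∀ a ∈ intrinsicInterior ℝ S, G a = (g a : EReal) :=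
  legendre_double_transform_concave_general S g hg W hW G hG
end

section
/- Let f : ℝ^k → ℝ ∪ {+∞} be convex, not identically +∞, and lower semicontinuous at a point x ∈ ℝ^k. Then the Legendre biconjugate satisfies f**(x) = f(x). -/
/-!
`f** ≤ f` is the Fenchel–Young inequality. Conversely, an affine minorant `⟪t, ·⟫ + b` of `f`
gives `f* t ≤ -b`, so it suffices to find, for each real `c < f x`, an affine minorant exceeding
`c` at `x`. By lower semicontinuity `(x, c)` lies outside the closure of the convex epigraph, so a
hyperplane separates them. A non-vertical hyperplane is the graph of the required minorant; a
vertical one is tilted by adding a large multiple of it to any affine minorant of `f`. Such a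
minorant exists in finite dimension: once `f` is extended to be constant along the directions
orthogonal to the affine span of its domain, the domain has interior points, where `f` is
continuous, so the points just below the graph there are outside the closure of the epigraph and
the hyperplane separating them cannot be vertical.
-/

open scoped RealInnerProductSpace
open Filter Topology Set

variable {E : Type*} {D : Set E} {φ : E → ℝ}

def epigraphOn (D : Set E) (φ : E → ℝ) : Set (E × ℝ) := {p | p.1 ∈ D ∧ φ p.1 ≤ p.2}

theorem notMem_closure_epigraphOn_of_eventually_lt [TopologicalSpace E] {x : E} {c c' : ℝ}
    (hc : c' < c) (h : ∀ᶠ z in 𝓝 x, z ∈ D → c < φ z) : (x, c') ∉ closure (epigraphOn D φ) := by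
  intro hmem
  obtain ⟨⟨z, r⟩, ⟨hz, hr⟩, hzD, hφz⟩ :=
    mem_closure_iff_nhds.1 hmem _ (prod_mem_nhds h (Iio_mem_nhds hc))
  linarith [hz hzD, show r < c from hr]

section NormedSpace

variable [NormedAddCommGroup E] [NormedSpace ℝ E]

theorem ConvexOn.exists_separation_of_notMem_closure (hφ : ConvexOn ℝ D φ) (hD : D.Nonempty)
    {x : E} {c : ℝ} (h : (x, c) ∉ closure (epigraphOn D φ)) :
    ∃ (ℓ : StrongDual ℝ E) (s u : ℝ), 0 ≤ s ∧ ℓ x + s * c < u ∧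
      ∀ y ∈ D, u < ℓ y + s * φ y := by
  obtain ⟨Λ, u, hx, hepi⟩ :=
    geometric_hahn_banach_point_closed hφ.convex_epigraph.closure isClosed_closure h
  set ℓ : StrongDual ℝ E := Λ.comp (.inl ℝ E ℝ)
  set s := Λ (0, 1)
  have hΛ : ∀ y r, Λ (y, r) = ℓ y + s * r := fun y r => by
    rw [show ((y, r) : E × ℝ) = (y, 0) + r • (0, 1) by simp, map_add, map_smul, smul_eq_mul,
      mul_comm]
    rfl
  have hsep : ∀ y ∈ D, ∀ r, φ y ≤ r → u < ℓ y + s * r := fun y hy r hr =>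
    hΛ y r ▸ hepi _ (subset_closure ⟨hy, hr⟩)
  refine ⟨ℓ, s, u, ?_, hΛ x c ▸ hx, fun y hy => hsep y hy _ le_rfl⟩
  -- for `s < 0`, points of the epigraph high enough above `y` violate the separation
  by_contra! hs
  obtain ⟨y, hy⟩ := hD
  have := hsep y hy _ (le_max_left (φ y) ((u - ℓ y) / s))
  have : s * max (φ y) ((u - ℓ y) / s) ≤ u - ℓ y :=
    (mul_le_mul_of_nonpos_left (le_max_right _ _) hs.le).trans_eq (mul_div_cancel₀ _ hs.ne)
  linarith

theorem exists_affine_minorant_of_separation {x : E} {c : ℝ} {ℓ : StrongDual ℝ E} {s u : ℝ}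
    (hs : 0 < s) (hx : ℓ x + s * c < u) (hD : ∀ y ∈ D, u < ℓ y + s * φ y) :
    ∃ (ℓ' : StrongDual ℝ E) (b : ℝ), (∀ y ∈ D, ℓ' y + b ≤ φ y) ∧ c < ℓ' x + b := by
  have key : ∀ y, (-s⁻¹ • ℓ) y + s⁻¹ * u = (u - ℓ y) / s := fun y => by
    simp only [smul_apply, smul_eq_mul]; field_simp; ring
  refine ⟨-s⁻¹ • ℓ, s⁻¹ * u, fun y hy => ?_, ?_⟩
  · rw [key, div_le_iff₀ hs]; linarith [hD y hy]
  · rw [key, lt_div_iff₀ hs]; linarith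

theorem exists_affine_minorant_of_vertical_separation {x : E} {ℓ₀ ℓ : StrongDual ℝ E}
    {b₀ u : ℝ} (hmin : ∀ y ∈ D, ℓ₀ y + b₀ ≤ φ y) (hx : ℓ x < u) (hD : ∀ y ∈ D, u < ℓ y)
    (c : ℝ) : ∃ (ℓ' : StrongDual ℝ E) (b : ℝ), (∀ y ∈ D, ℓ' y + b ≤ φ y) ∧ c < ℓ' x + b := by
  have hgap : 0 < u - ℓ x := sub_pos.2 hx
  set μ := (|c - (ℓ₀ x + b₀)| + 1) / (u - ℓ x)
  have hμ : 0 ≤ μ := by positivity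
  have key : ∀ y, (ℓ₀ - μ • ℓ) y + (b₀ + μ * u) = ℓ₀ y + b₀ + μ * (u - ℓ y) := fun y => by
    simp only [sub_apply, smul_apply, smul_eq_mul]; ring
  refine ⟨ℓ₀ - μ • ℓ, b₀ + μ * u, fun y hy => ?_, ?_⟩
  · rw [key]; nlinarith [hmin y hy, hD y hy]
  · rw [key, div_mul_cancel₀ _ hgap.ne']
    linarith [le_abs_self (c - (ℓ₀ x + b₀))]

theorem ConvexOn.eventually_gt_of_eventually_lt (hφ : ConvexOn ℝ D φ) {y : E} {M : ℝ}
    (h : ∀ᶠ w in 𝓝 y, w ∈ D ∧ φ w < M) : ∀ᶠ z in 𝓝 y, z ∈ D → 2 * φ y - M < φ z := by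
  have hrefl : Tendsto (fun z => (2 : ℝ) • y - z) (𝓝 y) (𝓝 y) := by
    have := (continuous_const.sub continuous_id).tendsto y (f := fun z : E => (2 : ℝ) • y - z)
    rwa [show (2 : ℝ) • y - y = y by module] at this
  filter_upwards [hrefl.eventually h] with z ⟨hz'D, hz'⟩ hzD
  have hmid := hφ.2 hzD hz'D (by norm_num : (0 : ℝ) ≤ 1 / 2) (by norm_num : (0 : ℝ) ≤ 1 / 2)
    (by norm_num)
  rw [show (1 / 2 : ℝ) • z + (1 / 2 : ℝ) • ((2 : ℝ) • y - z) = y by module, smul_eq_mul,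
    smul_eq_mul] at hmid
  linarith

theorem ConvexOn.exists_notMem_closure_epigraphOn [FiniteDimensional ℝ E] (hφ : ConvexOn ℝ D φ)
    {y : E} (hy : y ∈ interior D) : ∃ c, (y, c) ∉ closure (epigraphOn D φ) := by
  have hcont : ContinuousAt φ y :=
    hφ.continuousOn_interior.continuousAt (isOpen_interior.mem_nhds hy)
  have hbdd : ∀ᶠ w in 𝓝 y, w ∈ D ∧ φ w < φ y + 1 :=
    Eventually.and (mem_interior_iff_mem_nhds.1 hy) (hcont.eventually (gt_mem_nhds (lt_add_one _)))
  exact ⟨φ y - 2, notMem_closure_epigraphOn_of_eventually_lt (by linarith)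
    (hφ.eventually_gt_of_eventually_lt hbdd)⟩

theorem ConvexOn.exists_affine_minorant_of_interior_nonempty [FiniteDimensional ℝ E]
    (hφ : ConvexOn ℝ D φ) (hD : (interior D).Nonempty) :
    ∃ (ℓ : StrongDual ℝ E) (b : ℝ), ∀ y ∈ D, ℓ y + b ≤ φ y := by
  obtain ⟨y, hy⟩ := hD
  obtain ⟨c, hc⟩ := hφ.exists_notMem_closure_epigraphOn hy
  obtain ⟨ℓ, s, u, hs, hyc, hsep⟩ :=
    hφ.exists_separation_of_notMem_closure ⟨y, interior_subset hy⟩ hc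
  have hs : 0 < s := hs.lt_of_ne <| by rintro rfl; linarith [hsep y (interior_subset hy)]
  obtain ⟨ℓ', b, hmin, -⟩ := exists_affine_minorant_of_separation hs hyc hsep
  exact ⟨ℓ', b, hmin⟩

end NormedSpace

section InnerProductSpace

variable [NormedAddCommGroup E] [InnerProductSpace ℝ E]

open EuclideanGeometry in
theorem affineSpan_preimage_orthogonalProjection_affineSpan [Nonempty (affineSpan ℝ D)]
    [(affineSpan ℝ D).direction.HasOrthogonalProjection] :
    affineSpan ℝ ((fun y => (orthogonalProjection (affineSpan ℝ D) y : E)) ⁻¹' D) = ⊤ := by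
  set A := affineSpan ℝ D
  set K : E → E := fun y => (orthogonalProjection A y : E)
  have hK : ∀ y ∈ A, K y = y := fun y hy => orthogonalProjection_eq_self_iff.2 hy
  have hDK : D ⊆ K ⁻¹' D := fun y hy => by
    rw [mem_preimage, hK y (subset_affineSpan ℝ D hy)]
    exact hy
  obtain ⟨y₀, hy₀⟩ := (affineSpan_nonempty (k := ℝ)).1 (nonempty_subtype.1 ‹Nonempty A›)
  refine eq_top_iff.2 fun y _ => ?_
  have hperp : y -ᵥ K y ∈ A.directionᗮ := vsub_orthogonalProjection_mem_direction_orthogonal A y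
  have hdir : y -ᵥ K y ∈ (affineSpan ℝ (K ⁻¹' D)).direction := by
    have hmem : (y -ᵥ K y) +ᵥ y₀ ∈ K ⁻¹' D := by
      have := orthogonalProjection_vadd_eq_self (subset_affineSpan ℝ D hy₀) hperp
      rw [mem_preimage, show K ((y -ᵥ K y) +ᵥ y₀) = y₀ from congrArg Subtype.val this]
      exact hy₀
    rw [direction_affineSpan]
    simpa using vsub_mem_vectorSpan ℝ hmem (hDK hy₀)
  rw [← vsub_vadd y (K y)]
  exact AffineSubspace.vadd_mem_of_mem_direction hdir
    (affineSpan_mono ℝ hDK (orthogonalProjection_mem y))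

theorem ConvexOn.exists_affine_minorant [FiniteDimensional ℝ E] (hφ : ConvexOn ℝ D φ)
    (hD : D.Nonempty) : ∃ (ℓ : StrongDual ℝ E) (b : ℝ), ∀ y ∈ D, ℓ y + b ≤ φ y := by
  obtain ⟨y₀, hy₀⟩ := hD
  have : Nonempty (affineSpan ℝ D) := ⟨⟨y₀, subset_affineSpan ℝ D hy₀⟩⟩
  set K : E →ᵃ[ℝ] E := (affineSpan ℝ D).subtype.comp
    (EuclideanGeometry.orthogonalProjection (affineSpan ℝ D)).toAffineMap
  have hK : ∀ y ∈ D, K y = y := fun y hy =>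
    EuclideanGeometry.orthogonalProjection_eq_self_iff.2 (subset_affineSpan ℝ D hy)
  have hφK := hφ.comp_affineMap K
  obtain ⟨ℓ, b, hmin⟩ := hφK.exists_affine_minorant_of_interior_nonempty
    (hφK.1.interior_nonempty_iff_affineSpan_eq_top.2
      affineSpan_preimage_orthogonalProjection_affineSpan)
  refine ⟨ℓ, b, fun y hy => ?_⟩
  simpa [hK y hy] using hmin y (by simp [hK y hy, hy])

theorem ConvexOn.exists_affine_minorant_gt [FiniteDimensional ℝ E] (hφ : ConvexOn ℝ D φ)
    (hD : D.Nonempty) {x : E} {c c' : ℝ} (hc : c' < c) (hx : ∀ᶠ z in 𝓝 x, z ∈ D → c < φ z) :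
    ∃ (ℓ : StrongDual ℝ E) (b : ℝ), (∀ y ∈ D, ℓ y + b ≤ φ y) ∧ c' < ℓ x + b := by
  obtain ⟨ℓ, s, u, hs, hxc, hsep⟩ := hφ.exists_separation_of_notMem_closure hD
    (notMem_closure_epigraphOn_of_eventually_lt hc hx)
  rcases hs.eq_or_lt with rfl | hs
  · obtain ⟨ℓ₀, b₀, hmin⟩ := hφ.exists_affine_minorant hD
    simp only [zero_mul, add_zero] at hxc hsep
    exact exists_affine_minorant_of_vertical_separation hmin hxc hsep c'
  · exact exists_affine_minorant_of_separation hs hxc hsep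

end InnerProductSpace

theorem convexOn_toReal_of_le_combo [AddCommGroup E] [Module ℝ E] {f : E → EReal}
    (hbot : ∀ y, f y ≠ ⊥)
    (hconv : ∀ x y : E, ∀ a b : ℝ, 0 ≤ a → 0 ≤ b → a + b = 1 →
      f (a • x + b • y) ≤ (a : EReal) * f x + (b : EReal) * f y) :
    ConvexOn ℝ {y | f y ≠ ⊤} fun y => (f y).toReal := by
  have hle : ∀ x ∈ {y | f y ≠ ⊤}, ∀ y ∈ {y | f y ≠ ⊤}, ∀ a b : ℝ, 0 ≤ a → 0 ≤ b → a + b = 1 →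
      f (a • x + b • y) ≤ ((a * (f x).toReal + b * (f y).toReal : ℝ) : EReal) := by
    intro x hx y hy a b ha hb hab
    have := hconv x y a b ha hb hab
    rwa [← EReal.coe_toReal hx (hbot x), ← EReal.coe_toReal hy (hbot y)] at this
  refine ⟨fun x hx y hy a b ha hb hab => ?_, fun x hx y hy a b ha hb hab => ?_⟩
  · exact ne_top_of_le_ne_top (EReal.coe_ne_top _) (hle x hx y hy a b ha hb hab)
  · exact (EReal.toReal_le_toReal (hle x hx y hy a b ha hb hab) (hbot _)
      (EReal.coe_ne_top _)).trans_eq (EReal.toReal_coe _)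

theorem EReal.coe_sub_le_of_coe_sub_le {a : ℝ} {b c : EReal} (h : (a : EReal) - b ≤ c) :
    (a : EReal) - c ≤ b := by
  induction b using EReal.rec <;> induction c using EReal.rec <;> simp_all [← EReal.coe_sub]
  linarith

theorem le_iSup_inner_sub_of_forall_le {F : Type*} [NormedAddCommGroup F]
    [InnerProductSpace ℝ F] {f fstar : F → EReal}
    (hfstar : ∀ t, fstar t = ⨆ y, (((⟪t, y⟫ : ℝ) : EReal) - f y)) {t : F} {b : ℝ}
    (hmin : ∀ y, ((⟪t, y⟫ + b : ℝ) : EReal) ≤ f y) (x : F) :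
    ((⟪t, x⟫ + b : ℝ) : EReal) ≤ ⨆ t, (((⟪t, x⟫ : ℝ) : EReal) - fstar t) := by
  have hconj : fstar t ≤ ((-b : ℝ) : EReal) := by
    rw [hfstar]
    refine iSup_le fun y => ?_
    have hy := hmin y
    generalize f y = z at hy ⊢
    induction z using EReal.rec with
    | bot => simp at hy
    | coe r =>
      norm_cast at hy ⊢
      linarith
    | top => simp
  calc ((⟪t, x⟫ + b : ℝ) : EReal) = ((⟪t, x⟫ : ℝ) : EReal) - ((-b : ℝ) : EReal) := by
        norm_cast; ring
    _ ≤ ((⟪t, x⟫ : ℝ) : EReal) - fstar t := EReal.sub_le_sub le_rfl hconj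
    _ ≤ ⨆ t, (((⟪t, x⟫ : ℝ) : EReal) - fstar t) :=
      le_iSup (fun t => ((⟪t, x⟫ : ℝ) : EReal) - fstar t) t

/-- Fenchel–Moreau: if `f : ℝ^k → ℝ ∪ {+∞}` is convex, not identically `+∞`, and lower
semicontinuous at `x`, then the Legendre biconjugate `f**` agrees with `f` at `x`. -/
theorem legendre_biconjugate_eq
    {k : ℕ} (f : EuclideanSpace ℝ (Fin k) → EReal)
    (hbot : ∀ y, f y ≠ ⊥)
    (hne : ∃ y, f y ≠ ⊤)
    (hconv : ∀ x y : EuclideanSpace ℝ (Fin k), ∀ a b : ℝ, 0 ≤ a → 0 ≤ b → a + b = 1 →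
      f (a • x + b • y) ≤ (a : EReal) * f x + (b : EReal) * f y)
    (fstar : EuclideanSpace ℝ (Fin k) → EReal)
    (hfstar : ∀ t, fstar t = ⨆ y, (((⟪t, y⟫ : ℝ) : EReal) - f y))
    (x : EuclideanSpace ℝ (Fin k))
    (hlsc : f x ≤ Filter.liminf f (nhds x)) :
    (⨆ t, (((⟪t, x⟫ : ℝ) : EReal) - fstar t)) = f x := by
  have hfin : ∀ y, f y ≠ ⊤ → f y = ((f y).toReal : EReal) := fun y hy =>
    (EReal.coe_toReal hy (hbot y)).symm
  refine le_antisymm (iSup_le fun t => EReal.coe_sub_le_of_coe_sub_le ?_)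
    (le_of_forall_lt fun c hc => ?_)
  · rw [hfstar]
    exact le_iSup (fun y => ((⟪t, y⟫ : ℝ) : EReal) - f y) x
  obtain ⟨c', hc', hc'x⟩ := EReal.exists_between_coe_real hc
  obtain ⟨c'', hc'', hc''x⟩ := EReal.exists_between_coe_real hc'x
  have hev : ∀ᶠ z in 𝓝 x, f z ≠ ⊤ → c'' < (f z).toReal :=
    (eventually_lt_of_lt_liminf (hc''x.trans_le hlsc)).mono fun z hz hzD => by
      rw [hfin z hzD] at hz; exact_mod_cast hz
  obtain ⟨ℓ, b, hmin, hxb⟩ := (convexOn_toReal_of_le_combo hbot hconv).exists_affine_minorant_gt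
    hne (EReal.coe_lt_coe_iff.1 hc'') hev
  set t := (InnerProductSpace.toDual ℝ _).symm ℓ
  have hmin' : ∀ y, ((⟪t, y⟫ + b : ℝ) : EReal) ≤ f y := fun y => by
    by_cases hy : f y = ⊤
    · simp [hy]
    · rw [hfin y hy, InnerProductSpace.toDual_symm_apply]
      exact_mod_cast hmin y hy
  calc c < c' := hc'
    _ ≤ ((⟪t, x⟫ + b : ℝ) : EReal) := by
      rw [InnerProductSpace.toDual_symm_apply]; exact_mod_cast hxb.le
    _ ≤ ⨆ t, (((⟪t, x⟫ : ℝ) : EReal) - fstar t) := le_iSup_inner_sub_of_forall_le hfstar hmin' x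
end

section
/- Let V be a finite dimensional real vector space and C₁, C₂ convex cones in V with the closure of C₁ minus the origin contained in the interior of C₂. Then C₁ is bounded in the Hilbert projective metric of C₂, i.e., there exists K such that d_{C₂}(v,w) ≤ K for all nonzero v, w ∈ C₁. -/
/-!
Normalise to the unit sphere: the unit directions of `C₁` form a compact subset of the open set
`interior C₂`, so a ball of one radius `ε` around each of them lies in `C₂`. For nonzero
`v, w ∈ C₁` this gives `w - a • v ∈ C₂` and `b • v - w ∈ C₂` with `a, b` equal to `‖w‖ / ‖v‖`
times `ε / 2` and `2 / ε` respectively, whence `β / α ≤ b / a = 4 / ε ^ 2`.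
-/

variable {V : Type*} [NormedAddCommGroup V] [NormedSpace ℝ V]

/-- `α(v,w) = sup {λ > 0 : w - λ•v ∈ C}`. -/
noncomputable def hilbertAlpha (C : Set V) (v w : V) : ℝ :=
  sSup {l : ℝ | 0 < l ∧ w - l • v ∈ C}

/-- `β(v,w) = inf {μ > 0 : μ•v - w ∈ C}`. -/
noncomputable def hilbertBeta (C : Set V) (v w : V) : ℝ :=
  sInf {m : ℝ | 0 < m ∧ m • v - w ∈ C}

/-- The Hilbert projective (pseudo-)metric of the cone `C`. -/
noncomputable def hilbertDist (C : Set V) (v w : V) : ℝ :=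
  Real.log (hilbertBeta C v w / hilbertAlpha C v w)

open Metric

/- The hypothesis `a ≤ b` covers the junk cases: when the `α`-set is unbounded, or `β = 0`,
`hilbertDist` is `log 0 = 0`. -/
theorem hilbertDist_le_log_div {C : Set V} {v w : V} {a b : ℝ} (ha : 0 < a) (hab : a ≤ b)
    (hwa : w - a • v ∈ C) (hbv : b • v - w ∈ C) :
    hilbertDist C v w ≤ Real.log (b / a) := by
  have hb : 0 < b := ha.trans_le hab
  have hlog_nonneg : 0 ≤ Real.log (b / a) := Real.log_nonneg ((one_le_div ha).2 hab)
  have hβ_le : hilbertBeta C v w ≤ b := csInf_le ⟨0, fun _ hm => hm.1.le⟩ ⟨hb, hbv⟩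
  have hβ_nonneg : 0 ≤ hilbertBeta C v w := le_csInf ⟨b, hb, hbv⟩ fun _ hm => hm.1.le
  by_cases hbdd : BddAbove {l : ℝ | 0 < l ∧ w - l • v ∈ C}
  · have hα_ge : a ≤ hilbertAlpha C v w := le_csSup hbdd ⟨ha, hwa⟩
    have hratio : hilbertBeta C v w / hilbertAlpha C v w ≤ b / a :=
      div_le_div₀ hb.le hβ_le ha hα_ge
    rcases (div_nonneg hβ_nonneg (ha.le.trans hα_ge)).eq_or_lt with h | h
    · rwa [hilbertDist, ← h, Real.log_zero]
    · exact Real.log_le_log h hratio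
  · rwa [hilbertDist, hilbertAlpha, Real.sSup_of_not_bddAbove hbdd, div_zero, Real.log_zero]

theorem sub_norm_smul_mem_of_ball_subset {C : Set V} {w x : V} {ε : ℝ}
    (hC : ∀ r : ℝ, 0 < r → ∀ v ∈ C, r • v ∈ C) (hw : w ≠ 0)
    (hball : ball (‖w‖⁻¹ • w) ε ⊆ C) (hx : ‖x‖ < ε) :
    w - ‖w‖ • x ∈ C := by
  have hw' : 0 < ‖w‖ := norm_pos_iff.2 hw
  have hmem : ‖w‖⁻¹ • w - x ∈ C := hball (by simpa [dist_eq_norm] using hx)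
  have hscale : w - ‖w‖ • x = ‖w‖ • (‖w‖⁻¹ • w - x) := by
    rw [smul_sub, smul_inv_smul₀ hw'.ne']
  exact hscale ▸ hC _ hw' _ hmem

theorem hilbertDist_le_of_ball_subset {C : Set V} {v w : V} {ε : ℝ}
    (hC : ∀ r : ℝ, 0 < r → ∀ v ∈ C, r • v ∈ C) (hε : 0 < ε) (hε2 : ε ≤ 2)
    (hv : v ≠ 0) (hw : w ≠ 0)
    (hball_v : ball (‖v‖⁻¹ • v) ε ⊆ C) (hball_w : ball (‖w‖⁻¹ • w) ε ⊆ C) :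
    hilbertDist C v w ≤ Real.log (4 / ε ^ 2) := by
  have hv' : 0 < ‖v‖ := norm_pos_iff.2 hv
  have hw' : 0 < ‖w‖ := norm_pos_iff.2 hw
  have hsmall : ∀ {u : V}, u ≠ 0 → ‖(ε / 2 / ‖u‖) • u‖ < ε := fun hu => by
    rw [norm_smul, Real.norm_of_nonneg (by positivity), div_mul_cancel₀ _ (norm_ne_zero_iff.2 hu)]
    linarith
  set a := ε / 2 * (‖w‖ / ‖v‖)
  set b := 2 / ε * (‖w‖ / ‖v‖)
  have hwa : w - a • v ∈ C := by
    convert sub_norm_smul_mem_of_ball_subset hC hw hball_w (hsmall hv) using 2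
    rw [smul_smul]; congr 1; simp only [a]; field_simp
  have hbv : b • v - w ∈ C := by
    have hmem := hC (2 / ε * (‖w‖ / ‖v‖)) (by positivity) _
      (sub_norm_smul_mem_of_ball_subset hC hv hball_v (hsmall hw))
    convert hmem using 1
    simp only [b]; match_scalars <;> field_simp
  have hab : a ≤ b := by
    simp only [a, b]
    gcongr
  calc hilbertDist C v w ≤ Real.log (b / a) := hilbertDist_le_log_div (by positivity) hab hwa hbv
    _ = Real.log (4 / ε ^ 2) := by congr 1; simp only [a, b]; field_simp; ring

theorem exists_ball_normalize_subset [FiniteDimensional ℝ V] {C U : Set V} (hU : IsOpen U)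
    (hC : ∀ r : ℝ, 0 < r → ∀ v ∈ C, r • v ∈ C) (hsub : closure C \ {0} ⊆ U) :
    ∃ ε > 0, ε ≤ 2 ∧ ∀ v ∈ C, v ≠ 0 → ball (‖v‖⁻¹ • v) ε ⊆ U := by
  have hcompact : IsCompact (closure C ∩ sphere (0 : V) 1) :=
    isCompact_of_isClosed_isBounded (isClosed_closure.inter isClosed_sphere)
      (isBounded_sphere.subset Set.inter_subset_right)
  have hsphere_sub : closure C ∩ sphere (0 : V) 1 ⊆ U := fun u ⟨hu, hu1⟩ =>
    hsub ⟨hu, ne_zero_of_mem_unit_sphere (⟨u, hu1⟩ : sphere (0 : V) 1)⟩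
  obtain ⟨δ, hδ, hthick⟩ := hcompact.exists_thickening_subset_open hU hsphere_sub
  refine ⟨min δ 2, lt_min hδ two_pos, min_le_right _ _, fun v hv hv0 x hx => hthick ?_⟩
  have hv' : 0 < ‖v‖ := norm_pos_iff.2 hv0
  refine mem_thickening_iff.2 ⟨‖v‖⁻¹ • v, ⟨subset_closure (hC _ (inv_pos.2 hv') v hv), ?_⟩,
    (mem_ball.1 hx).trans_le (min_le_left _ _)⟩
  rw [mem_sphere_zero_iff_norm, norm_smul, norm_inv, norm_norm, inv_mul_cancel₀ hv'.ne']

theorem hilbert_bounded_of_compactly_contained_general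
    [FiniteDimensional ℝ V]
    (C₁ C₂ : Set V)
    (hcone₁ : ∀ r : ℝ, 0 < r → ∀ v ∈ C₁, r • v ∈ C₁)
    (hcone₂ : ∀ r : ℝ, 0 < r → ∀ v ∈ C₂, r • v ∈ C₂)
    (hsub : closure C₁ \ {0} ⊆ interior C₂) :
    ∃ K : ℝ, ∀ v ∈ C₁, v ≠ 0 → ∀ w ∈ C₁, w ≠ 0 → hilbertDist C₂ v w ≤ K := by
  obtain ⟨ε, hε, hε2, hball⟩ := exists_ball_normalize_subset isOpen_interior hcone₁ hsub
  refine ⟨Real.log (4 / ε ^ 2), fun v hv hv0 w hw hw0 => ?_⟩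
  exact hilbertDist_le_of_ball_subset hcone₂ hε hε2 hv0 hw0
    ((hball v hv hv0).trans interior_subset) ((hball w hw hw0).trans interior_subset)

/-- If `C₁`, `C₂` are convex cones in a finite dimensional real vector space with
`closure C₁ \ {0} ⊆ interior C₂`, then `C₁` is bounded in the Hilbert projective
metric of `C₂`. -/
theorem hilbert_bounded_of_compactly_contained
    [FiniteDimensional ℝ V]
    (C₁ C₂ : Set V)
    (hconv₁ : Convex ℝ C₁) (hcone₁ : ∀ r : ℝ, 0 < r → ∀ v ∈ C₁, r • v ∈ C₁)
    (hconv₂ : Convex ℝ C₂) (hcone₂ : ∀ r : ℝ, 0 < r → ∀ v ∈ C₂, r • v ∈ C₂)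
    (hsub : closure C₁ \ {0} ⊆ interior C₂) :
    ∃ K : ℝ, ∀ v ∈ C₁, v ≠ 0 → ∀ w ∈ C₁, w ≠ 0 → hilbertDist C₂ v w ≤ K :=
  hilbert_bounded_of_compactly_contained_general C₁ C₂ hcone₁ hcone₂ hsub
end

section
/- Let D be a k×k real diagonal matrix and let e be a coordinate eigenvector with |De| = ‖D‖ (operator norm). Suppose v is a unit vector and r, K > 0 are such that |log‖Du‖ - log‖Dw‖| < K for all unit vectors u, w within distance r of v (in the projective metric). Then log‖Dv‖ ≥ log‖D‖ + log((1/2)·sin r) - K. -/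
/-!
Because `D` is diagonal and `‖D e‖ = ‖D‖`, reading off the `e`-coordinate gives
`‖D w‖ ≥ ‖D‖ · |⟪w, e⟫|` for every `w`. It therefore suffices to find a unit vector `w` in the
projective `r`-ball around `v` with `|⟪w, e⟫| ≥ sin r / 2` and to compare `γ w` with `γ v` through
the oscillation bound. For `r ≥ π/2` the ball contains `e`. Otherwise either `v` itself will do,
or `|⟪v, e⟫| < 1/2` and the component of `±e` orthogonal to `v` has length at least `1/2`, so
rotating `v` by the angle `r` towards it gives `w`.
-/

open scoped RealInnerProductSpace

/-- The standard metric on the projective space, expressed on unit vectors: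
the angle between the lines spanned by `u` and `w`. -/
noncomputable def projDist {k : ℕ} (u w : EuclideanSpace ℝ (Fin k)) : ℝ :=
  Real.arccos |⟪u, w⟫|

open Real

section InnerProductSpace

variable {F : Type*} [NormedAddCommGroup F] [InnerProductSpace ℝ F]

theorem exists_norm_eq_one_inner_eq_zero_inner_eq_sqrt {v e : F} (hv : ‖v‖ = 1) (he : ‖e‖ = 1)
    (hve : |⟪v, e⟫| < 1) :
    ∃ u : F, ‖u‖ = 1 ∧ ⟪v, u⟫ = 0 ∧ ⟪u, e⟫ = √(1 - ⟪v, e⟫ ^ 2) := by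
  set c := ⟪v, e⟫ with hc
  set n := e - c • v
  have hvn : ⟪v, n⟫ = 0 := by
    simp only [n, inner_sub_right, real_inner_smul_right, real_inner_self_eq_norm_sq, hv]
    ring
  have hn_sq : ‖n‖ ^ 2 = 1 - c ^ 2 := by
    rw [norm_sub_sq_real, real_inner_smul_right, real_inner_comm, ← hc, norm_smul, he, hv,
      Real.norm_eq_abs, mul_one, sq_abs]
    ring
  have hn_norm : ‖n‖ = √(1 - c ^ 2) := by rw [← hn_sq, sqrt_sq (norm_nonneg n)]
  have hn_pos : 0 < ‖n‖ := by
    rw [hn_norm]; exact sqrt_pos.2 (by nlinarith [sq_abs c, abs_nonneg c])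
  have hne : ⟪n, e⟫ = ‖n‖ ^ 2 :=
    calc ⟪n, e⟫ = ⟪n, n + c • v⟫ := by simp only [n, sub_add_cancel]
      _ = ‖n‖ ^ 2 := by
        rw [inner_add_right, real_inner_smul_right, real_inner_comm v n, hvn, mul_zero, add_zero,
          real_inner_self_eq_norm_sq]
  refine ⟨‖n‖⁻¹ • n, ?_, ?_, ?_⟩
  · rw [norm_smul, norm_inv, norm_norm, inv_mul_cancel₀ hn_pos.ne']
  · rw [real_inner_smul_right, hvn, mul_zero]
  · rw [real_inner_smul_left, hne, ← hn_norm]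
    field_simp

theorem norm_cos_smul_add_sin_smul {v u : F} (hv : ‖v‖ = 1) (hu : ‖u‖ = 1) (hvu : ⟪v, u⟫ = 0)
    (θ : ℝ) : ‖cos θ • v + sin θ • u‖ = 1 := by
  have h : ‖cos θ • v + sin θ • u‖ ^ 2 = 1 := by
    rw [norm_add_sq_real, real_inner_smul_left, real_inner_smul_right, hvu, norm_smul,
      norm_smul, hv, hu, Real.norm_eq_abs, Real.norm_eq_abs]
    nlinarith [sin_sq_add_cos_sq θ, sq_abs (sin θ), sq_abs (cos θ)]
  nlinarith [norm_nonneg (cos θ • v + sin θ • u)]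

theorem inner_cos_smul_add_sin_smul {v u : F} (hv : ‖v‖ = 1) (hvu : ⟪v, u⟫ = 0) (θ : ℝ) :
    ⟪v, cos θ • v + sin θ • u⟫ = cos θ := by
  rw [inner_add_right, real_inner_smul_right, real_inner_smul_right, hvu,
    real_inner_self_eq_norm_sq, hv]
  ring

theorem arccos_abs_inner_self {v : F} (hv : ‖v‖ = 1) : arccos |⟪v, v⟫| = 0 := by
  rw [real_inner_self_eq_norm_sq, hv, one_pow, abs_one, arccos_one]

theorem exists_norm_eq_one_arccos_abs_inner_le_half_mul_sin_le {v e : F} (hv : ‖v‖ = 1)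
    (he : ‖e‖ = 1) {r : ℝ} (hr₀ : 0 ≤ r) (hr : r ≤ π / 2) :
    ∃ w : F, ‖w‖ = 1 ∧ arccos |⟪v, w⟫| ≤ r ∧ 1 / 2 * sin r ≤ |⟪w, e⟫| := by
  wlog hc : 0 ≤ ⟪v, e⟫ generalizing e
  · obtain ⟨w, hw, hvw, hwe⟩ :=
      this (e := -e) (by rwa [norm_neg]) (by rw [inner_neg_right]; linarith)
    exact ⟨w, hw, hvw, by rwa [inner_neg_right, abs_neg] at hwe⟩
  set c := ⟪v, e⟫
  by_cases hvc : 1 / 2 * sin r ≤ c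
  · exact ⟨v, hv, by rw [arccos_abs_inner_self hv]; exact hr₀, hvc.trans (le_abs_self c)⟩
  have hsin := sin_le_one r
  have hcos := cos_nonneg_of_mem_Icc ⟨by linarith [pi_pos], hr⟩
  obtain ⟨u, hu, hvu, hue⟩ :=
    exists_norm_eq_one_inner_eq_zero_inner_eq_sqrt hv he (by rw [abs_of_nonneg hc]; linarith)
  have hsqrt : 1 / 2 ≤ √(1 - c ^ 2) := (le_sqrt (by norm_num) (by nlinarith)).2 (by nlinarith)
  refine ⟨cos r • v + sin r • u, norm_cos_smul_add_sin_smul hv hu hvu r, ?_, ?_⟩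
  · rw [inner_cos_smul_add_sin_smul hv hvu, abs_of_nonneg hcos,
      arccos_cos hr₀ (by linarith [pi_pos])]
  · have hsin₀ : 0 ≤ sin r := sin_nonneg_of_nonneg_of_le_pi hr₀ (by linarith [pi_pos])
    have hwe : ⟪cos r • v + sin r • u, e⟫ = cos r * c + sin r * √(1 - c ^ 2) := by
      rw [inner_add_left, real_inner_smul_left, real_inner_smul_left, hue]
    rw [hwe, abs_of_nonneg (by positivity)]
    nlinarith [mul_nonneg hcos hc]

end InnerProductSpace

theorem log_half_mul_sin_nonpos (r : ℝ) : log (1 / 2 * sin r) ≤ 0 := by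
  rw [← log_abs]
  refine log_nonpos (abs_nonneg _) ?_
  rw [abs_mul]
  nlinarith [abs_sin_le_one r, abs_nonneg (sin r), abs_of_pos (one_half_pos : (0 : ℝ) < 1 / 2)]

section Diagonal

variable {𝕜 ι : Type*} [RCLike 𝕜] [Fintype ι] [DecidableEq ι]

theorem EuclideanSpace.apply_eq_mul_of_map_single
    (D : EuclideanSpace 𝕜 ι →ₗ[𝕜] EuclideanSpace 𝕜 ι)
    {d : ι → 𝕜} (hD : ∀ i, D (EuclideanSpace.single i 1) = d i • EuclideanSpace.single i 1)
    (w : EuclideanSpace 𝕜 ι) (i : ι) : D w i = d i * w i := by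
  conv_lhs => rw [← (EuclideanSpace.basisFun ι 𝕜).sum_repr w]
  simp [map_sum, hD, Pi.single_apply, mul_comm]

theorem EuclideanSpace.opNorm_mul_norm_apply_le
    (D : EuclideanSpace 𝕜 ι →L[𝕜] EuclideanSpace 𝕜 ι)
    {d : ι → 𝕜} (hD : ∀ i, D (EuclideanSpace.single i 1) = d i • EuclideanSpace.single i 1)
    {i₀ : ι} (hi₀ : ‖D (EuclideanSpace.single i₀ 1)‖ = ‖D‖) (w : EuclideanSpace 𝕜 ι) :
    ‖D‖ * ‖w i₀‖ ≤ ‖D w‖ := by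
  have hDi₀ : ‖D‖ = ‖d i₀‖ := by simp [← hi₀, hD, norm_smul]
  calc ‖D‖ * ‖w i₀‖ = ‖D w i₀‖ := by
        rw [hDi₀, ← norm_mul, ← EuclideanSpace.apply_eq_mul_of_map_single D.toLinearMap hD]; rfl
    _ ≤ ‖D w‖ := PiLp.norm_apply_le (D w) i₀

end Diagonal

theorem diagonal_log_norm_lower_bound_general
    {k : ℕ} (D : EuclideanSpace ℝ (Fin k) →L[ℝ] EuclideanSpace ℝ (Fin k))
    (hdiag : ∀ i : Fin k, ∃ d : ℝ,
      D (EuclideanSpace.single i (1 : ℝ)) = d • EuclideanSpace.single i (1 : ℝ))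
    (i₀ : Fin k) (e : EuclideanSpace ℝ (Fin k))
    (he : e = EuclideanSpace.single i₀ (1 : ℝ))
    (heig : ‖D e‖ = ‖D‖)
    (v : EuclideanSpace ℝ (Fin k)) (hv : ‖v‖ = 1)
    (r K : ℝ) (hr : 0 < r)
    (hosc : ∀ u w : EuclideanSpace ℝ (Fin k), ‖u‖ = 1 → ‖w‖ = 1 →
      projDist v u ≤ r → projDist v w ≤ r →
      |Real.log ‖D u‖ - Real.log ‖D w‖| < K) :
    Real.log ‖D v‖ ≥ Real.log ‖D‖ + Real.log ((1 / 2) * Real.sin r) - K := by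
  choose d hd using hdiag
  subst he
  have he : ‖EuclideanSpace.single i₀ (1 : ℝ)‖ = 1 := by simp
  suffices ∃ w, ‖w‖ = 1 ∧ projDist v w ≤ r ∧ log ‖D‖ + log (1 / 2 * sin r) ≤ log ‖D w‖ by
    obtain ⟨w, hw, hvw, hDw⟩ := this
    have hvv : projDist v v ≤ r := by rw [projDist, arccos_abs_inner_self hv]; exact hr.le
    linarith [(abs_lt.1 (hosc w v hw hv hvw hvv)).2]
  rcases le_or_gt r (π / 2) with hr₂ | hr₂
  · obtain ⟨w, hw, hvw, hwe⟩ :=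
      exists_norm_eq_one_arccos_abs_inner_le_half_mul_sin_le hv he hr.le hr₂
    refine ⟨w, hw, hvw, ?_⟩
    rcases (norm_nonneg D).eq_or_lt with hD₀ | hD₀
    · simpa [norm_eq_zero.1 hD₀.symm] using log_half_mul_sin_nonpos r
    have hsin : 0 < sin r := sin_pos_of_pos_of_lt_pi hr (by linarith [pi_pos])
    rw [← log_mul hD₀.ne' (by positivity)]
    refine log_le_log (by positivity) ((mul_le_mul_of_nonneg_left hwe hD₀.le).trans ?_)
    simpa [EuclideanSpace.inner_single_right] using
      EuclideanSpace.opNorm_mul_norm_apply_le D hd heig w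
  · refine ⟨_, he, (arccos_le_pi_div_two.2 (abs_nonneg _)).trans hr₂.le, ?_⟩
    rw [heig]
    linarith [log_half_mul_sin_nonpos r]

/-- Supporting lemma for diagonal matrices: if `γ = log‖D·‖` oscillates by less than `K`
on a projective ball of radius `r` around the unit vector `v`, then
`log‖Dv‖ ≥ log‖D‖ + log((1/2)·sin r) - K`. -/
theorem diagonal_log_norm_lower_bound
    {k : ℕ} (D : EuclideanSpace ℝ (Fin k) →L[ℝ] EuclideanSpace ℝ (Fin k))
    (hinj : Function.Injective D)
    (hdiag : ∀ i : Fin k, ∃ d : ℝ,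
      D (EuclideanSpace.single i (1 : ℝ)) = d • EuclideanSpace.single i (1 : ℝ))
    (i₀ : Fin k) (e : EuclideanSpace ℝ (Fin k))
    (he : e = EuclideanSpace.single i₀ (1 : ℝ))
    (heig : ‖D e‖ = ‖D‖)
    (v : EuclideanSpace ℝ (Fin k)) (hv : ‖v‖ = 1)
    (r K : ℝ) (hr : 0 < r) (hK : 0 < K)
    (hosc : ∀ u w : EuclideanSpace ℝ (Fin k), ‖u‖ = 1 → ‖w‖ = 1 →
      projDist v u ≤ r → projDist v w ≤ r →
      |Real.log ‖D u‖ - Real.log ‖D w‖| < K) :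
    Real.log ‖D v‖ ≥ Real.log ‖D‖ + Real.log ((1 / 2) * Real.sin r) - K :=
  diagonal_log_norm_lower_bound_general D hdiag i₀ e he heig v hv r K hr hosc
end

section
/- Let A ∈ GL(k,ℝ) and r, K > 0. Suppose v ∈ ℙℝ^k satisfies |γ(v) - γ(w)| < K for all w in the ball B(v,r) of the projective space, where γ(u) = log(‖Au‖/‖u‖). Then there is a constant ρ depending only on K and r (not on A) such that γ(v) ≥ log‖A‖ - ρ. -/
/-!
Let `t = min r (π/2)` and `s = sin t`. The oscillation bound gives `‖A w‖ ≤ e^K ‖A v‖` on the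
projective ball of radius `t` about `v`. For a unit vector `p ⟂ v` the two points
`cos t • v ± s • p` of that ball differ by `2 s • p`, so `‖A p‖ ≤ e^K ‖A v‖ / s`. Splitting an
arbitrary vector along `v` and `v^⊥` then gives `‖A‖ ≤ (1 + e^K / s) ‖A v‖`, i.e.
`ρ = log (1 + e^K / s)` works.
-/

open scoped RealInnerProductSpace

lemma le_exp_mul_of_abs_log_sub_lt {a b K : ℝ} (ha : 0 < a) (hb : 0 ≤ b)
    (h : |Real.log a - Real.log b| < K) : b ≤ Real.exp K * a := by
  rcases hb.eq_or_lt with rfl | hb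
  · positivity
  have hlog : Real.log b < K + Real.log a := by linarith [(abs_lt.1 h).1]
  calc b = Real.exp (Real.log b) := (Real.exp_log hb).symm
    _ ≤ Real.exp (K + Real.log a) := Real.exp_le_exp.2 hlog.le
    _ = Real.exp K * a := by rw [Real.exp_add, Real.exp_log ha]

section InnerProductSpace

variable {E F : Type*} [NormedAddCommGroup E] [InnerProductSpace ℝ E]
  [NormedAddCommGroup F] [NormedSpace ℝ F]

lemma norm_cos_smul_add_sin_smul_s5 {v p : E} (hv : ‖v‖ = 1) (hp : ‖p‖ = 1) (hvp : ⟪v, p⟫ = 0)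
    (θ : ℝ) : ‖Real.cos θ • v + Real.sin θ • p‖ = 1 := by
  have hsq : ‖Real.cos θ • v + Real.sin θ • p‖ ^ 2 = 1 := by
    rw [norm_add_sq_real, real_inner_smul_left, real_inner_smul_right, hvp, norm_smul,
      norm_smul, hv, hp, Real.norm_eq_abs, Real.norm_eq_abs]
    nlinarith [sq_abs (Real.cos θ), sq_abs (Real.sin θ), Real.sin_sq_add_cos_sq θ]
  exact (pow_eq_one_iff_of_nonneg (norm_nonneg _) two_ne_zero).1 hsq

lemma opNorm_le_norm_apply_add {v : E} (hv : ‖v‖ = 1) (A : E →L[ℝ] F) {C : ℝ} (hC : 0 ≤ C)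
    (h : ∀ p : E, ‖p‖ = 1 → ⟪v, p⟫ = 0 → ‖A p‖ ≤ C) : ‖A‖ ≤ ‖A v‖ + C := by
  refine A.opNorm_le_bound (by positivity) fun x => ?_
  set z := x - ⟪v, x⟫ • v with hz
  have hvz : ⟪v, z⟫ = 0 := by
    rw [hz, inner_sub_right, real_inner_smul_right, real_inner_self_eq_norm_sq, hv]; ring
  have hz_le : ‖z‖ ≤ ‖x‖ := by
    have hzz : ‖z‖ ^ 2 = ⟪z, x⟫ := by
      rw [← real_inner_self_eq_norm_sq]
      nth_rewrite 2 [hz]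
      rw [inner_sub_right, real_inner_smul_right, real_inner_comm v z, hvz, mul_zero, sub_zero]
    nlinarith [real_inner_le_norm z x, norm_nonneg z, norm_nonneg x]
  have hAz : ‖A z‖ ≤ C * ‖z‖ := by
    rcases eq_or_ne z 0 with hz0 | hz0
    · simp [hz0]
    have hzn : 0 < ‖z‖ := norm_pos_iff.2 hz0
    have hunit := h (‖z‖⁻¹ • z) (by rw [norm_smul, norm_inv, norm_norm, inv_mul_cancel₀ hzn.ne'])
      (by rw [real_inner_smul_right, hvz, mul_zero])
    rw [map_smul, norm_smul, norm_inv, norm_norm, inv_mul_le_iff₀ hzn] at hunit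
    linarith
  calc ‖A x‖ = ‖⟪v, x⟫ • A v + A z‖ := by rw [hz, map_sub, map_smul, add_sub_cancel]
    _ ≤ |⟪v, x⟫| * ‖A v‖ + C * ‖z‖ := by
        grw [norm_add_le, norm_smul, Real.norm_eq_abs, hAz]
    _ ≤ ‖x‖ * ‖A v‖ + C * ‖x‖ := by
        have := abs_real_inner_le_norm v x
        rw [hv, one_mul] at this
        gcongr
    _ = (‖A v‖ + C) * ‖x‖ := by ring

end InnerProductSpace

section ProjectiveBall

variable {k : ℕ} {F : Type*} [NormedAddCommGroup F] [NormedSpace ℝ F]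

lemma projDist_cos_smul_add_sin_smul {v p : EuclideanSpace ℝ (Fin k)} (hv : ‖v‖ = 1)
    (hvp : ⟪v, p⟫ = 0) {θ : ℝ} (hθ : |θ| ≤ Real.pi / 2) :
    projDist v (Real.cos θ • v + Real.sin θ • p) = |θ| := by
  have hinner : ⟪v, Real.cos θ • v + Real.sin θ • p⟫ = Real.cos |θ| := by
    rw [inner_add_right, real_inner_smul_right, real_inner_smul_right, hvp,
      real_inner_self_eq_norm_sq, hv, Real.cos_abs]
    ring
  have hcos : 0 ≤ Real.cos |θ| :=
    Real.cos_nonneg_of_mem_Icc ⟨by linarith [abs_nonneg θ, Real.pi_pos], hθ⟩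
  rw [projDist, hinner, abs_of_nonneg hcos,
    Real.arccos_cos (abs_nonneg θ) (by linarith [Real.pi_pos])]

lemma sin_mul_norm_apply_le {v p : EuclideanSpace ℝ (Fin k)} (hv : ‖v‖ = 1) (hp : ‖p‖ = 1)
    (hvp : ⟪v, p⟫ = 0) (A : EuclideanSpace ℝ (Fin k) →L[ℝ] F) {t M : ℝ} (ht : 0 ≤ t)
    (htπ : t ≤ Real.pi / 2)
    (hM : ∀ w : EuclideanSpace ℝ (Fin k), ‖w‖ = 1 → projDist v w ≤ t → ‖A w‖ ≤ M) :
    Real.sin t * ‖A p‖ ≤ M := by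
  set w : ℝ → EuclideanSpace ℝ (Fin k) := fun θ => Real.cos θ • v + Real.sin θ • p
  have hAw : ∀ θ, |θ| = t → ‖A (w θ)‖ ≤ M := fun θ hθ =>
    hM _ (norm_cos_smul_add_sin_smul_s5 hv hp hvp θ)
      (by rw [projDist_cos_smul_add_sin_smul hv hvp (hθ ▸ htπ), hθ])
  have hdiff : A (w t) - A (w (-t)) = (2 * Real.sin t) • A p := by
    simp only [w, map_add, map_smul, Real.cos_neg, Real.sin_neg]
    module
  calc Real.sin t * ‖A p‖ ≤ ‖A (w t) - A (w (-t))‖ / 2 := by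
        rw [hdiff, norm_smul, Real.norm_eq_abs]
        nlinarith [le_abs_self (2 * Real.sin t), norm_nonneg (A p)]
    _ ≤ (‖A (w t)‖ + ‖A (w (-t))‖) / 2 := by grw [norm_sub_le]
    _ ≤ M := by linarith [hAw t (abs_of_nonneg ht), hAw (-t) (by rw [abs_neg, abs_of_nonneg ht])]

lemma opNorm_le_of_forall_projDist_le {v : EuclideanSpace ℝ (Fin k)} (hv : ‖v‖ = 1)
    (A : EuclideanSpace ℝ (Fin k) →L[ℝ] F) {t M : ℝ} (ht : 0 < t) (htπ : t ≤ Real.pi / 2)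
    (hM : ∀ w : EuclideanSpace ℝ (Fin k), ‖w‖ = 1 → projDist v w ≤ t → ‖A w‖ ≤ M) :
    ‖A‖ ≤ ‖A v‖ + M / Real.sin t := by
  have hsin : 0 < Real.sin t := Real.sin_pos_of_pos_of_lt_pi ht (by linarith [Real.pi_pos])
  have hM0 : 0 ≤ M := (norm_nonneg _).trans (hM v hv (by
    rw [projDist, real_inner_self_eq_norm_sq, hv, one_pow, abs_one, Real.arccos_one]
    exact ht.le))
  refine opNorm_le_norm_apply_add hv A (by positivity) fun p hp hvp => ?_
  rw [le_div_iff₀ hsin, mul_comm]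
  exact sin_mul_norm_apply_le hv hp hvp A ht.le htπ hM

end ProjectiveBall

theorem log_norm_lower_bound_of_osc_general
    {k : ℕ} (K r : ℝ) (hr : 0 < r) :
    ∃ ρ : ℝ, ∀ A : EuclideanSpace ℝ (Fin k) →L[ℝ] EuclideanSpace ℝ (Fin k),
      Function.Injective A → Function.Surjective A →
      ∀ v : EuclideanSpace ℝ (Fin k), ‖v‖ = 1 →
      (∀ w : EuclideanSpace ℝ (Fin k), ‖w‖ = 1 → projDist v w ≤ r →
        |Real.log ‖A v‖ - Real.log ‖A w‖| < K) →
      Real.log ‖A v‖ ≥ Real.log ‖A‖ - ρ := by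
  set t := min r (Real.pi / 2)
  have ht : 0 < t := lt_min hr (by linarith [Real.pi_pos])
  refine ⟨Real.log (1 + Real.exp K / Real.sin t), fun A hinj _ v hv hosc => ?_⟩
  have hAv : 0 < ‖A v‖ := norm_pos_iff.2 fun h0 =>
    by simp [hinj (h0.trans A.map_zero.symm)] at hv
  have hsin : 0 < Real.sin t := Real.sin_pos_of_pos_of_lt_pi ht
    ((min_le_right _ _).trans_lt (by linarith [Real.pi_pos]))
  have hA : ‖A‖ ≤ (1 + Real.exp K / Real.sin t) * ‖A v‖ :=
    (opNorm_le_of_forall_projDist_le hv A ht (min_le_right _ _)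
      fun w hw hwt => le_exp_mul_of_abs_log_sub_lt hAv (norm_nonneg _)
        (hosc w hw (hwt.trans (min_le_left _ _)))).trans_eq (by ring)
  have hApos : 0 < ‖A‖ := hAv.trans_le (by simpa [hv] using A.le_opNorm v)
  have hlog := Real.log_le_log hApos hA
  rw [Real.log_mul (by positivity) hAv.ne'] at hlog
  linarith

/-- If `γ(u) = log(‖Au‖/‖u‖)` oscillates by less than `K` on a projective ball of
radius `r` around `v`, then `γ(v) ≥ log‖A‖ - ρ(K,r)` for a constant `ρ(K,r)`
independent of the invertible map `A`. -/
theorem log_norm_lower_bound_of_osc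
    {k : ℕ} (K r : ℝ) (hK : 0 < K) (hr : 0 < r) :
    ∃ ρ : ℝ, ∀ A : EuclideanSpace ℝ (Fin k) →L[ℝ] EuclideanSpace ℝ (Fin k),
      Function.Injective A → Function.Surjective A →
      ∀ v : EuclideanSpace ℝ (Fin k), ‖v‖ = 1 →
      (∀ w : EuclideanSpace ℝ (Fin k), ‖w‖ = 1 → projDist v w ≤ r →
        |Real.log ‖A v‖ - Real.log ‖A w‖| < K) →
      Real.log ‖A v‖ ≥ Real.log ‖A‖ - ρ :=
  log_norm_lower_bound_of_osc_general K r hr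
end

section
/- Let T : Σ → Σ be a subshift and A : Σ → GL(k,ℝ) continuous. Suppose A is quasi-multiplicative: there exist C > 0 and m ∈ ℕ such that for all admissible words I, J there is an admissible word K with |K| ≤ m, IKJ admissible, and ‖A(IKJ)‖ ≥ C‖A(I)‖‖A(J)‖, where ‖A(I)‖ = max_{x∈[I]}‖A^{|I|}(x)‖. Then for every t > 0, the sequence a_n := log Σ_{I∈L(n)} ‖A(I)‖^t satisfies: the limit lim_n a_n/n exists and equals inf over n of (a_{n+m'}+c)/n for suitable constants, i.e., (1/n)·log Σ_{I∈L(n)} ‖A(I)‖^t converges. -/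
open Filter
open scoped Classical

/-- The left shift on the two-sided full shift. -/
def shiftMap {q : ℕ} (x : ℤ → Fin q) : ℤ → Fin q := fun i => x (i + 1)

/-- The matrix cocycle product `A^n(x) = A(T^{n-1}x)⋯A(Tx)A(x)` over the shift. -/
noncomputable def shiftCocycle {q k : ℕ}
    (A : (ℤ → Fin q) → (EuclideanSpace ℝ (Fin k) →L[ℝ] EuclideanSpace ℝ (Fin k))) :
    ℕ → (ℤ → Fin q) → (EuclideanSpace ℝ (Fin k) →L[ℝ] EuclideanSpace ℝ (Fin k))
  | 0, _ => 1
  | n + 1, x => shiftCocycle A n (shiftMap x) ∘L A x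

/-- The cylinder `[I] ⊆ Σ` of a word `I` of length `n`. -/
def cylinder {q : ℕ} (Sig : Set (ℤ → Fin q)) {n : ℕ} (I : Fin n → Fin q) :
    Set (ℤ → Fin q) :=
  {x ∈ Sig | ∀ i : Fin n, x ((i : ℕ) : ℤ) = I i}

/-- A word is admissible if its cylinder in `Σ` is nonempty. -/
def Admissible {q : ℕ} (Sig : Set (ℤ → Fin q)) {n : ℕ} (I : Fin n → Fin q) : Prop :=
  (cylinder Sig I).Nonempty

/-- `‖A(I)‖ = max_{x ∈ [I]} ‖A^{|I|}(x)‖`. -/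
noncomputable def wordNorm {q k : ℕ} (Sig : Set (ℤ → Fin q))
    (A : (ℤ → Fin q) → (EuclideanSpace ℝ (Fin k) →L[ℝ] EuclideanSpace ℝ (Fin k)))
    {n : ℕ} (I : Fin n → Fin q) : ℝ :=
  sSup ((fun x => ‖shiftCocycle A n x‖) '' cylinder Sig I)
/-! `Z n := ∑_{I ∈ L(n)} ‖A(I)‖^t` is submultiplicative, because the cocycle norm is
submultiplicative along concatenation. Quasi-multiplicativity makes it almost
supermultiplicative: inserting a bridge word of length `j ≤ m` between `I` and `J` gives
`C^t Z n Z m ≤ (∑_{j ≤ m} Z j) Z (n + m)`. So if `Z` never vanishes, `log Z` is subadditive and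
superadditive up to a constant, hence bounded below by a linear function, and Fekete's lemma
applies; if `Z` vanishes somewhere it vanishes eventually and the limit is `0`. -/

open Function Set

theorem Subadditive.bddBelow_div_of_le_add {u : ℕ → ℝ} (hu : Subadditive u) {K : ℝ}
    (hK : ∀ n m, u n + u m ≤ u (n + m) + K) : BddBelow (range fun n : ℕ => u n / n) := by
  have hu0 : 0 ≤ u 0 := by linarith [hu 0 0]
  have hlin : ∀ n : ℕ, u 0 + n * (u 1 - K) ≤ u n := by
    intro n
    induction n with
    | zero => simp
    | succ n ih => push_cast; linarith [hK n 1]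
  refine ⟨min 0 (u 1 - K), ?_⟩
  rintro _ ⟨n, rfl⟩
  rcases n.eq_zero_or_pos with rfl | hn
  · simp
  · have hn' : (0 : ℝ) < n := by exact_mod_cast hn
    refine (min_le_right _ _).trans ((le_div_iff₀ hn').2 ?_)
    linarith [hlin n]

theorem exists_tendsto_log_div_of_almost_multiplicative {Z : ℕ → ℝ} (hZ : ∀ n, 0 ≤ Z n)
    (hsub : ∀ n m, Z (n + m) ≤ Z n * Z m) {c B : ℝ} (hc : 0 < c)
    (hsuper : ∀ n m, c * Z n * Z m ≤ B * Z (n + m)) :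
    ∃ L, Tendsto (fun n : ℕ => Real.log (Z n) / n) atTop (nhds L) := by
  by_cases hpos : ∀ n, 0 < Z n
  · have hB : 0 < B := pos_of_mul_pos_left
      ((mul_pos (mul_pos hc (hpos 0)) (hpos 0)).trans_le (hsuper 0 0)) (hZ 0)
    have hlog_sub : Subadditive fun n => Real.log (Z n) := fun n m => by
      rw [← Real.log_mul (hpos n).ne' (hpos m).ne']
      exact Real.log_le_log (hpos _) (hsub n m)
    have hlog_super : ∀ n m, Real.log (Z n) + Real.log (Z m)
        ≤ Real.log (Z (n + m)) + (Real.log B - Real.log c) := fun n m => by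
      have hn := hpos n
      have hm := hpos m
      have h := Real.log_le_log (by positivity) (hsuper n m)
      rw [Real.log_mul (by positivity) hm.ne', Real.log_mul hc.ne' hn.ne',
        Real.log_mul hB.ne' (hpos _).ne'] at h
      linarith
    exact ⟨hlog_sub.lim, hlog_sub.tendsto_lim (hlog_sub.bddBelow_div_of_le_add hlog_super)⟩
  · push Not at hpos
    obtain ⟨n₀, hn₀⟩ := hpos
    have hzero : ∀ n ≥ n₀, Z n = 0 := fun n hn => by
      have h := hsub n₀ (n - n₀)
      rw [Nat.add_sub_cancel' hn, le_antisymm hn₀ (hZ n₀), zero_mul] at h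
      exact le_antisymm h (hZ n)
    refine ⟨0, tendsto_const_nhds.congr' ?_⟩
    filter_upwards [eventually_ge_atTop n₀] with n hn
    rw [hzero n hn, Real.log_zero, zero_div]

theorem Fintype.sum_sum_fin_append {α M : Type*} [Fintype α] [AddCommMonoid M] {n m : ℕ}
    (f : (Fin (n + m) → α) → M) :
    ∑ I : Fin n → α, ∑ J : Fin m → α, f (Fin.append I J) = ∑ W, f W := by
  rw [← Fintype.sum_prod_type']
  exact Fintype.sum_equiv (Fin.appendEquiv n m) _ _ fun _ => rfl

section Subshift

variable {q k : ℕ} {Sig : Set (ℤ → Fin q)}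
  {A : (ℤ → Fin q) → (EuclideanSpace ℝ (Fin k) →L[ℝ] EuclideanSpace ℝ (Fin k))}

theorem shiftMap_iterate_apply (n : ℕ) (x : ℤ → Fin q) (i : ℤ) :
    shiftMap^[n] x i = x (i + n) := by
  induction n generalizing x with
  | zero => simp
  | succ n ih =>
    rw [iterate_succ_apply, ih, shiftMap]
    push_cast
    ring_nf

theorem continuous_shiftMap : Continuous (shiftMap (q := q)) :=
  continuous_pi fun i => continuous_apply (i + 1)

theorem shiftCocycle_add (n m : ℕ) (x : ℤ → Fin q) :
    shiftCocycle A (n + m) x = shiftCocycle A m (shiftMap^[n] x) ∘L shiftCocycle A n x := by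
  induction n generalizing x with
  | zero => ext; simp [shiftCocycle]
  | succ n ih =>
    rw [show n + 1 + m = n + m + 1 by omega, shiftCocycle, ih, shiftCocycle, iterate_succ_apply,
      ContinuousLinearMap.comp_assoc]

theorem continuous_shiftCocycle (hA : Continuous A) (n : ℕ) : Continuous (shiftCocycle A n) := by
  induction n with
  | zero => exact continuous_const
  | succ n ih => exact (ih.comp continuous_shiftMap).clm_comp hA

theorem isClosed_setOf_forall_rel (Q : Fin q → Fin q → Prop) :
    IsClosed {x : ℤ → Fin q | ∀ i, Q (x i) (x (i + 1))} := by
  rw [ofPred_forall]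
  exact isClosed_iInter fun i => (isClosed_discrete {p : Fin q × Fin q | Q p.1 p.2}).preimage
    (f := fun x : ℤ → Fin q => (x i, x (i + 1))) (by fun_prop)

theorem mapsTo_shiftMap_setOf_forall_rel (Q : Fin q → Fin q → Prop) :
    MapsTo shiftMap {x : ℤ → Fin q | ∀ i, Q (x i) (x (i + 1))}
      {x : ℤ → Fin q | ∀ i, Q (x i) (x (i + 1))} :=
  fun _ hx i => hx (i + 1)

theorem isClosed_cylinder (hSig : IsClosed Sig) {n : ℕ} (I : Fin n → Fin q) :
    IsClosed (cylinder Sig I) := by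
  change IsClosed (Sig ∩ {x | ∀ i : Fin n, x ((i : ℕ) : ℤ) = I i})
  rw [ofPred_forall]
  exact hSig.inter (isClosed_iInter fun i => isClosed_eq (continuous_apply _) continuous_const)

theorem norm_shiftCocycle_le_wordNorm (hSig : IsClosed Sig) (hA : Continuous A) {n : ℕ}
    {I : Fin n → Fin q} {x : ℤ → Fin q} (hx : x ∈ cylinder Sig I) :
    ‖shiftCocycle A n x‖ ≤ wordNorm Sig A I :=
  le_csSup (((isClosed_cylinder hSig I).isCompact.image
    (continuous_shiftCocycle hA n).norm).bddAbove) ⟨x, hx, rfl⟩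

theorem wordNorm_nonneg {n : ℕ} (I : Fin n → Fin q) : 0 ≤ wordNorm Sig A I :=
  Real.sSup_nonneg (by rintro _ ⟨x, -, rfl⟩; exact norm_nonneg _)

theorem mem_cylinder_of_mem_cylinder_append {n m : ℕ} {I : Fin n → Fin q} {J : Fin m → Fin q}
    {x : ℤ → Fin q} (hx : x ∈ cylinder Sig (Fin.append I J)) : x ∈ cylinder Sig I :=
  ⟨hx.1, fun i => by simpa using hx.2 (Fin.castAdd m i)⟩

theorem iterate_mem_cylinder_of_mem_cylinder_append (hT : MapsTo shiftMap Sig Sig) {n m : ℕ}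
    {I : Fin n → Fin q} {J : Fin m → Fin q} {x : ℤ → Fin q}
    (hx : x ∈ cylinder Sig (Fin.append I J)) : shiftMap^[n] x ∈ cylinder Sig J := by
  refine ⟨hT.iterate n hx.1, fun i => ?_⟩
  rw [shiftMap_iterate_apply, ← Fin.append_right I J i, ← hx.2]
  simp [add_comm]

theorem Admissible.of_append_left {n m : ℕ} {I : Fin n → Fin q} {J : Fin m → Fin q}
    (h : Admissible Sig (Fin.append I J)) : Admissible Sig I :=
  h.mono fun _ => mem_cylinder_of_mem_cylinder_append

theorem Admissible.of_append_right (hT : MapsTo shiftMap Sig Sig) {n m : ℕ}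
    {I : Fin n → Fin q} {J : Fin m → Fin q} (h : Admissible Sig (Fin.append I J)) :
    Admissible Sig J :=
  let ⟨_, hx⟩ := h
  ⟨_, iterate_mem_cylinder_of_mem_cylinder_append hT hx⟩

theorem wordNorm_append_le (hSig : IsClosed Sig) (hT : MapsTo shiftMap Sig Sig)
    (hA : Continuous A) {n m : ℕ} (I : Fin n → Fin q) (J : Fin m → Fin q) :
    wordNorm Sig A (Fin.append I J) ≤ wordNorm Sig A I * wordNorm Sig A J := by
  refine Real.sSup_le ?_ (mul_nonneg (wordNorm_nonneg I) (wordNorm_nonneg J))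
  rintro _ ⟨x, hx, rfl⟩
  calc ‖shiftCocycle A (n + m) x‖
      ≤ ‖shiftCocycle A m (shiftMap^[n] x)‖ * ‖shiftCocycle A n x‖ := by
        rw [shiftCocycle_add]
        exact ContinuousLinearMap.opNorm_comp_le _ _
    _ ≤ wordNorm Sig A J * wordNorm Sig A I :=
        mul_le_mul (norm_shiftCocycle_le_wordNorm hSig hA
            (iterate_mem_cylinder_of_mem_cylinder_append hT hx))
          (norm_shiftCocycle_le_wordNorm hSig hA (mem_cylinder_of_mem_cylinder_append hx))
          (norm_nonneg _) (wordNorm_nonneg J)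
    _ = wordNorm Sig A I * wordNorm Sig A J := mul_comm _ _

end Subshift

section PartitionSum

variable {q k : ℕ} {Sig : Set (ℤ → Fin q)}
  {A : (ℤ → Fin q) → (EuclideanSpace ℝ (Fin k) →L[ℝ] EuclideanSpace ℝ (Fin k))} {t : ℝ}

noncomputable def wordWeight (Sig : Set (ℤ → Fin q))
    (A : (ℤ → Fin q) → (EuclideanSpace ℝ (Fin k) →L[ℝ] EuclideanSpace ℝ (Fin k)))
    (t : ℝ) {n : ℕ} (I : Fin n → Fin q) : ℝ :=
  if Admissible Sig I then wordNorm Sig A I ^ t else 0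

noncomputable def partitionSum (Sig : Set (ℤ → Fin q))
    (A : (ℤ → Fin q) → (EuclideanSpace ℝ (Fin k) →L[ℝ] EuclideanSpace ℝ (Fin k)))
    (t : ℝ) (n : ℕ) : ℝ :=
  ∑ I : Fin n → Fin q, wordWeight Sig A t I

def QuasiMultiplicative (Sig : Set (ℤ → Fin q))
    (A : (ℤ → Fin q) → (EuclideanSpace ℝ (Fin k) →L[ℝ] EuclideanSpace ℝ (Fin k)))
    (C : ℝ) (m₀ : ℕ) : Prop :=
  ∀ (n₁ n₂ : ℕ) (I : Fin n₁ → Fin q) (J : Fin n₂ → Fin q),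
    Admissible Sig I → Admissible Sig J →
    ∃ l ≤ m₀, ∃ Kw : Fin l → Fin q,
      Admissible Sig (Fin.append (Fin.append I Kw) J) ∧
      C * wordNorm Sig A I * wordNorm Sig A J ≤ wordNorm Sig A (Fin.append (Fin.append I Kw) J)

theorem wordWeight_nonneg {n : ℕ} (I : Fin n → Fin q) : 0 ≤ wordWeight Sig A t I := by
  unfold wordWeight
  split_ifs
  exacts [Real.rpow_nonneg (wordNorm_nonneg I) t, le_rfl]

theorem partitionSum_nonneg (n : ℕ) : 0 ≤ partitionSum Sig A t n :=
  Finset.sum_nonneg fun I _ => wordWeight_nonneg I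

theorem wordWeight_append_le (hSig : IsClosed Sig) (hT : MapsTo shiftMap Sig Sig)
    (hA : Continuous A) (ht : 0 ≤ t) {n m : ℕ} (I : Fin n → Fin q) (J : Fin m → Fin q) :
    wordWeight Sig A t (Fin.append I J) ≤ wordWeight Sig A t I * wordWeight Sig A t J := by
  by_cases hIJ : Admissible Sig (Fin.append I J)
  · rw [wordWeight, wordWeight, wordWeight, if_pos hIJ, if_pos hIJ.of_append_left,
      if_pos (hIJ.of_append_right hT), ← Real.mul_rpow (wordNorm_nonneg I) (wordNorm_nonneg J)]
    exact Real.rpow_le_rpow (wordNorm_nonneg _) (wordNorm_append_le hSig hT hA I J) ht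
  · rw [wordWeight, if_neg hIJ]
    exact mul_nonneg (wordWeight_nonneg I) (wordWeight_nonneg J)

theorem partitionSum_add_le (hSig : IsClosed Sig) (hT : MapsTo shiftMap Sig Sig)
    (hA : Continuous A) (ht : 0 ≤ t) (n m : ℕ) :
    partitionSum Sig A t (n + m) ≤ partitionSum Sig A t n * partitionSum Sig A t m := by
  rw [partitionSum, ← Fintype.sum_sum_fin_append, partitionSum, partitionSum, Finset.sum_mul_sum]
  exact Finset.sum_le_sum fun I _ => Finset.sum_le_sum fun J _ =>
    wordWeight_append_le hSig hT hA ht I J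

/-- Summing over all bridges of length at most `m₀` spares choosing the one supplied by
quasi-multiplicativity. -/
theorem rpow_mul_wordWeight_mul_le_sum {C : ℝ} {m₀ : ℕ} (hqm : QuasiMultiplicative Sig A C m₀)
    (hC : 0 < C) (ht : 0 ≤ t) {n m : ℕ} (I : Fin n → Fin q) (J : Fin m → Fin q) :
    C ^ t * wordWeight Sig A t I * wordWeight Sig A t J ≤
      ∑ j ∈ Finset.range (m₀ + 1), ∑ K : Fin j → Fin q,
        wordWeight Sig A t (Fin.append (Fin.append I K) J) := by
  have hsum_nonneg : 0 ≤ ∑ j ∈ Finset.range (m₀ + 1), ∑ K : Fin j → Fin q,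
      wordWeight Sig A t (Fin.append (Fin.append I K) J) :=
    Finset.sum_nonneg fun _ _ => Finset.sum_nonneg fun _ _ => wordWeight_nonneg _
  by_cases hI : Admissible Sig I
  swap
  · rwa [show wordWeight Sig A t I = 0 from if_neg hI, mul_zero, zero_mul]
  by_cases hJ : Admissible Sig J
  swap
  · rwa [show wordWeight Sig A t J = 0 from if_neg hJ, mul_zero]
  obtain ⟨l, hl, K, hIKJ, hnorm⟩ := hqm n m I J hI hJ
  have hI0 := wordNorm_nonneg (Sig := Sig) (A := A) I
  have hJ0 := wordNorm_nonneg (Sig := Sig) (A := A) J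
  calc C ^ t * wordWeight Sig A t I * wordWeight Sig A t J
      = (C * wordNorm Sig A I * wordNorm Sig A J) ^ t := by
        rw [wordWeight, wordWeight, if_pos hI, if_pos hJ,
          Real.mul_rpow (by positivity) hJ0, Real.mul_rpow hC.le hI0]
    _ ≤ wordWeight Sig A t (Fin.append (Fin.append I K) J) := by
        rw [wordWeight, if_pos hIKJ]
        exact Real.rpow_le_rpow (by positivity) hnorm ht
    _ ≤ ∑ K : Fin l → Fin q, wordWeight Sig A t (Fin.append (Fin.append I K) J) :=
        Finset.single_le_sum (f := fun K : Fin l → Fin q =>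
          wordWeight Sig A t (Fin.append (Fin.append I K) J))
          (fun _ _ => wordWeight_nonneg _) (Finset.mem_univ K)
    _ ≤ _ := Finset.single_le_sum (f := fun j => ∑ K : Fin j → Fin q,
          wordWeight Sig A t (Fin.append (Fin.append I K) J))
        (fun _ _ => Finset.sum_nonneg fun _ _ => wordWeight_nonneg _)
        (Finset.mem_range_succ_iff.2 hl)

theorem rpow_mul_partitionSum_mul_le (hSig : IsClosed Sig) (hT : MapsTo shiftMap Sig Sig)
    (hA : Continuous A) {C : ℝ} {m₀ : ℕ} (hqm : QuasiMultiplicative Sig A C m₀) (hC : 0 < C)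
    (ht : 0 ≤ t) (n m : ℕ) :
    C ^ t * partitionSum Sig A t n * partitionSum Sig A t m ≤
      (∑ j ∈ Finset.range (m₀ + 1), partitionSum Sig A t j) * partitionSum Sig A t (n + m) := by
  calc C ^ t * partitionSum Sig A t n * partitionSum Sig A t m
      = ∑ I : Fin n → Fin q, ∑ J : Fin m → Fin q,
          C ^ t * wordWeight Sig A t I * wordWeight Sig A t J := by
        rw [partitionSum, partitionSum, mul_assoc, Finset.sum_mul_sum, Finset.mul_sum]
        simp only [Finset.mul_sum, mul_assoc]
    _ ≤ ∑ I : Fin n → Fin q, ∑ J : Fin m → Fin q, ∑ j ∈ Finset.range (m₀ + 1),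
          ∑ K : Fin j → Fin q, wordWeight Sig A t (Fin.append (Fin.append I K) J) :=
        Finset.sum_le_sum fun I _ => Finset.sum_le_sum fun J _ =>
          rpow_mul_wordWeight_mul_le_sum hqm hC ht I J
    _ = ∑ j ∈ Finset.range (m₀ + 1), partitionSum Sig A t (n + j + m) := by
        simp only [partitionSum, ← Fintype.sum_sum_fin_append]
        refine (Finset.sum_congr rfl fun I _ => Finset.sum_comm).trans ?_
        rw [Finset.sum_comm]
        exact Finset.sum_congr rfl fun j _ => Finset.sum_congr rfl fun I _ => Finset.sum_comm
    _ ≤ ∑ j ∈ Finset.range (m₀ + 1), partitionSum Sig A t j * partitionSum Sig A t (n + m) :=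
        Finset.sum_le_sum fun j _ => by
          rw [show n + j + m = n + m + j by omega, mul_comm]
          exact partitionSum_add_le hSig hT hA ht (n + m) j
    _ = _ := (Finset.sum_mul ..).symm

end PartitionSum

theorem quasimultiplicative_partition_sum_converges_general
    {q k : ℕ} (Q : Fin q → Fin q → Prop)
    (Sig : Set (ℤ → Fin q))
    (hSFT : Sig = {x | ∀ i : ℤ, Q (x i) (x (i + 1))})
    (A : (ℤ → Fin q) → (EuclideanSpace ℝ (Fin k) →L[ℝ] EuclideanSpace ℝ (Fin k)))
    (hA : Continuous A)
    (hqm : ∃ C : ℝ, 0 < C ∧ ∃ m₀ : ℕ,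
      ∀ (n₁ n₂ : ℕ) (I : Fin n₁ → Fin q) (J : Fin n₂ → Fin q),
        Admissible Sig I → Admissible Sig J →
        ∃ l ≤ m₀, ∃ Kw : Fin l → Fin q,
          Admissible Sig (Fin.append (Fin.append I Kw) J) ∧
          C * wordNorm Sig A I * wordNorm Sig A J ≤
            wordNorm Sig A (Fin.append (Fin.append I Kw) J)) :
    ∀ t : ℝ, 0 < t → ∃ c : ℝ,
      Tendsto (fun n : ℕ =>
          Real.log (∑ I : Fin n → Fin q,
            if Admissible Sig I then wordNorm Sig A I ^ t else 0) / n)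
        atTop (nhds c) := by
  intro t ht
  obtain ⟨C, hC, m₀, hqm⟩ := hqm
  subst hSFT
  exact exists_tendsto_log_div_of_almost_multiplicative partitionSum_nonneg
    (partitionSum_add_le (isClosed_setOf_forall_rel Q) (mapsTo_shiftMap_setOf_forall_rel Q) hA
      ht.le)
    (Real.rpow_pos_of_pos hC t)
    (rpow_mul_partitionSum_mul_le (isClosed_setOf_forall_rel Q)
      (mapsTo_shiftMap_setOf_forall_rel Q) hA hqm hC ht.le)

/-- If the cocycle `A` over a subshift of finite type is quasi-multiplicative, then for
every `t > 0` the sequence `(1/n) log Σ_{I ∈ L(n)} ‖A(I)‖^t` converges. -/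
theorem quasimultiplicative_partition_sum_converges
    {q k : ℕ} (Q : Fin q → Fin q → Prop)
    (Sig : Set (ℤ → Fin q))
    (hSFT : Sig = {x | ∀ i : ℤ, Q (x i) (x (i + 1))})
    (hne : Sig.Nonempty)
    (A : (ℤ → Fin q) → (EuclideanSpace ℝ (Fin k) →L[ℝ] EuclideanSpace ℝ (Fin k)))
    (hA : Continuous A)
    (hqm : ∃ C : ℝ, 0 < C ∧ ∃ m₀ : ℕ,
      ∀ (n₁ n₂ : ℕ) (I : Fin n₁ → Fin q) (J : Fin n₂ → Fin q),
        Admissible Sig I → Admissible Sig J →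
        ∃ l ≤ m₀, ∃ Kw : Fin l → Fin q,
          Admissible Sig (Fin.append (Fin.append I Kw) J) ∧
          C * wordNorm Sig A I * wordNorm Sig A J ≤
            wordNorm Sig A (Fin.append (Fin.append I Kw) J)) :
    ∀ t : ℝ, 0 < t → ∃ c : ℝ,
      Tendsto (fun n : ℕ =>
          Real.log (∑ I : Fin n → Fin q,
            if Admissible Sig I then wordNorm Sig A I ^ t else 0) / n)
        atTop (nhds c) :=
  quasimultiplicative_partition_sum_converges_general Q Sig hSFT A hA hqm
end

section
/- Let Φ = {log φ_n} be a subadditive potential on a compact system (X,T) with h_top(T) < ∞, and suppose the entropy map μ ↦ h_μ(T) is upper semicontinuous. Let (t_i) be a sequence with t_i → ∞ and let μ_{t_i} be an equilibrium state for t_iΦ, i.e., h_{μ_{t_i}}(T) + t_i·χ(μ_{t_i},Φ) = P_Φ(t_i). Then any weak-* accumulation point μ of (μ_{t_i}) satisfies χ(μ,Φ) = β(Φ) := sup{χ(ν,Φ) : ν ∈ M(X,T)}, i.e., μ is a Lyapunov maximizing measure for Φ. -/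
open MeasureTheory Filter Topology Real

/-! By Fekete's lemma the Lyapunov exponent `χ(μ) = lim (1/n) ∫ log φₙ dμ` is, on invariant
measures, the infimum over `n ≥ 1` of the weak-* continuous maps `μ ↦ (1/n) ∫ log φₙ dμ`, hence
upper semicontinuous. For invariant `ν`, with `B` a bound for the entropy,
`h(ν) + tᵢ χ(ν) ≤ P(tᵢ) = h(μ_{tᵢ}) + tᵢ χ(μ_{tᵢ}) ≤ B + tᵢ χ(μ_{tᵢ})`, so
`χ(ν) ≤ χ(μ_{tᵢ}) + (B - h(ν)) / tᵢ`. The error term tends to `0`, and upper semicontinuity at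
the accumulation point `μ` gives `χ(ν) ≤ χ(μ)`. -/

theorem Subadditive.le_div_of_tendsto {u : ℕ → ℝ} (hu : Subadditive u) {L : ℝ}
    (hL : Tendsto (fun n => u n / n) atTop (𝓝 L)) {n : ℕ} (hn : n ≠ 0) : L ≤ u n / n :=
  tendsto_nhds_unique hL (hu.tendsto_lim hL.bddBelow_range) ▸
    hu.lim_le_div hL.bddBelow_range hn

theorem le_div_of_tendsto_of_add_le {u : ℕ → ℝ}
    (hu : ∀ m n, 1 ≤ m → 1 ≤ n → u (n + m) ≤ u n + u m) {L : ℝ}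
    (hL : Tendsto (fun n => u n / n) atTop (𝓝 L)) {n : ℕ} (hn : 1 ≤ n) : L ≤ u n / n := by
  -- `u 0` is unconstrained; resetting it to `0` makes the sequence subadditive.
  set v : ℕ → ℝ := fun k => if k = 0 then 0 else u k
  have hv : Subadditive v := by
    intro m k
    rcases Nat.eq_zero_or_pos m with rfl | hm
    · simp [v]
    rcases Nat.eq_zero_or_pos k with rfl | hk
    · simp [v]
    simpa [v, hm.ne', hk.ne'] using hu k m hk hm
  have hvL : Tendsto (fun k => v k / k) atTop (𝓝 L) :=
    hL.congr' ((eventually_ne_atTop 0).mono fun k hk => by simp [v, hk])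
  have hn0 : n ≠ 0 := Nat.one_le_iff_ne_zero.mp hn
  simpa [v, hn0] using hv.le_div_of_tendsto hvL hn0

theorem upperSemicontinuousOn_of_tendsto_of_le {α β : Type*} [TopologicalSpace α]
    [LinearOrder β] [TopologicalSpace β] [OrderClosedTopology β] {s : Set α} {f : α → β}
    {g : ℕ → α → β} (hg : ∀ n, Continuous (g n)) (hle : ∀ᶠ n in atTop, ∀ x ∈ s, f x ≤ g n x)
    (hlim : ∀ x ∈ s, Tendsto (fun n => g n x) atTop (𝓝 (f x))) : UpperSemicontinuousOn f s := by
  intro x hx y hy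
  obtain ⟨n, hn, hgn⟩ := (hle.and ((hlim x hx).eventually_lt_const hy)).exists
  filter_upwards [nhdsWithin_le_nhds ((hg n).continuousAt.eventually_lt continuousAt_const hgn),
    self_mem_nhdsWithin] with x' hx' hs
  exact (hn x' hs).trans_lt hx'

theorem MapClusterPt.le_of_upperSemicontinuousWithinAt {α ι : Type*} [TopologicalSpace α]
    {l : Filter ι} {u : ι → α} {s : Set α} {x : α} {f : α → ℝ} (hx : MapClusterPt x l u)
    (hu : ∀ i, u i ∈ s) (hf : UpperSemicontinuousWithinAt f s x) {c : ℝ} {e : ι → ℝ}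
    (he : Tendsto e l (𝓝 0)) (hc : ∀ᶠ i in l, c ≤ f (u i) + e i) : c ≤ f x := by
  refine le_of_forall_pos_lt_add fun ε hε => ?_
  have hnear : ∃ᶠ i in l, f (u i) < f x + ε / 2 := by
    have := hf _ (by linarith : f x < f x + ε / 2)
    rw [eventually_nhdsWithin_iff] at this
    exact (hx.frequently this).mono fun i hi => hi (hu i)
  obtain ⟨i, hi, hci, hei⟩ :=
    (hnear.and_eventually (hc.and (he.eventually (gt_mem_nhds (half_pos hε))))).exists
  linarith

theorem isClosed_setOf_map_eq_self {X : Type*} [TopologicalSpace X] [HasOuterApproxClosed X]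
    [MeasurableSpace X] [BorelSpace X] {T : X → X} (hT : Continuous T) :
    IsClosed {μ : ProbabilityMeasure X | (μ : Measure X).map T = μ} := by
  have : {μ : ProbabilityMeasure X | (μ : Measure X).map T = μ} =
      {μ | μ.map hT.measurable.aemeasurable = μ} := by
    ext μ
    simp only [Set.mem_ofPred_eq, ← ProbabilityMeasure.toMeasure_injective.eq_iff,
      ProbabilityMeasure.toMeasure_map]
  rw [this]
  exact isClosed_eq (ProbabilityMeasure.continuous_map hT) continuous_id

section Lyapunov

variable {X : Type*} [TopologicalSpace X] [CompactSpace X] [MeasurableSpace X]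
  [OpensMeasurableSpace X] {T : X → X} {φ : ℕ → X → ℝ}

theorem integral_log_add_le {μ : Measure X} [IsFiniteMeasure μ] (hT : MeasurePreserving T μ μ)
    (hcont : ∀ n, Continuous (φ n)) (hpos : ∀ n x, 0 < φ n x)
    (hsub : ∀ m n : ℕ, 1 ≤ m → 1 ≤ n → ∀ x, φ (n + m) x ≤ φ n x * φ m (T^[n] x))
    {m n : ℕ} (hm : 1 ≤ m) (hn : 1 ≤ n) :
    ∫ x, log (φ (n + m) x) ∂μ ≤ ∫ x, log (φ n x) ∂μ + ∫ x, log (φ m x) ∂μ := by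
  have hlog k : Continuous fun x => log (φ k x) := (hcont k).log fun x => (hpos k x).ne'
  have hint k : Integrable (fun x => log (φ k x)) μ :=
    (hlog k).integrable_of_hasCompactSupport (.of_compactSpace _)
  have hTn := hT.iterate n
  have hshift : ∫ x, log (φ m (T^[n] x)) ∂μ = ∫ x, log (φ m x) ∂μ := by
    rw [← integral_map hTn.measurable.aemeasurable (hlog m).aestronglyMeasurable, hTn.map_eq]
  have hint_shift : Integrable (fun x => log (φ m (T^[n] x))) μ :=
    hTn.integrable_comp_of_integrable (hint m)
  rw [← hshift, ← integral_add (hint n) hint_shift]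
  refine integral_mono (hint _) ((hint n).add hint_shift) fun x => ?_
  calc log (φ (n + m) x) ≤ log (φ n x * φ m (T^[n] x)) :=
        log_le_log (hpos _ _) (hsub m n hm hn x)
    _ = log (φ n x) + log (φ m (T^[n] x)) := log_mul (hpos _ _).ne' (hpos _ _).ne'

theorem upperSemicontinuousOn_lyapunov (hT : Measurable T)
    (hcont : ∀ n, Continuous (φ n)) (hpos : ∀ n x, 0 < φ n x)
    (hsub : ∀ m n : ℕ, 1 ≤ m → 1 ≤ n → ∀ x, φ (n + m) x ≤ φ n x * φ m (T^[n] x))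
    {χ : ProbabilityMeasure X → ℝ}
    (hχ : ∀ μ ∈ {μ : ProbabilityMeasure X | (μ : Measure X).map T = μ},
      Tendsto (fun n : ℕ => (∫ x, log (φ n x) ∂(μ : Measure X)) / n) atTop (𝓝 (χ μ))) :
    UpperSemicontinuousOn χ {μ : ProbabilityMeasure X | (μ : Measure X).map T = μ} := by
  refine upperSemicontinuousOn_of_tendsto_of_le (fun n => ?_) ?_ hχ
  · exact (ProbabilityMeasure.continuous_integral_continuousMap
      (⟨_, (hcont n).log fun x => (hpos n x).ne'⟩ : C(X, ℝ))).div_const _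
  · filter_upwards [eventually_ge_atTop 1] with n hn μ hμ
    exact le_div_of_tendsto_of_add_le
      (fun m k hm hk => integral_log_add_le ⟨hT, hμ⟩ hcont hpos hsub hm hk) (hχ μ hμ) hn

end Lyapunov

theorem zero_temperature_limit_maximizing_general
    {X : Type*} [MetricSpace X] [CompactSpace X] [MeasurableSpace X] [BorelSpace X]
    (T : X → X) (hT : Continuous T)
    (φ : ℕ → X → ℝ)
    (hcont : ∀ n, Continuous (φ n))
    (hpos : ∀ n x, 0 < φ n x)
    (hsub : ∀ m n : ℕ, 1 ≤ m → 1 ≤ n → ∀ x, φ (n + m) x ≤ φ n x * φ m (T^[n] x))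
    (Inv : Set (ProbabilityMeasure X))
    (hInv : Inv = {μ : ProbabilityMeasure X | (μ : Measure X).map T = (μ : Measure X)})
    -- the Lyapunov exponent functional `χ(·,Φ)`
    (χ : ProbabilityMeasure X → ℝ)
    (hχ : ∀ μ ∈ Inv,
      Tendsto (fun n : ℕ => (∫ x, Real.log (φ n x) ∂(μ : Measure X)) / n)
        atTop (nhds (χ μ)))
    -- the entropy map, upper semicontinuous and bounded (finite topological entropy)
    (h : ProbabilityMeasure X → ℝ)
    (hbdd : ∃ B : ℝ, ∀ μ ∈ Inv, h μ ≤ B)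
    -- the subadditive pressure, given by the Cao–Feng–Huang variational principle
    (P : ℝ → ℝ)
    (hvar : ∀ t : ℝ, IsLUB {y : ℝ | ∃ μ ∈ Inv, y = h μ + t * χ μ} (P t))
    -- equilibrium states for `t_iΦ` with `t_i → ∞`
    (ts : ℕ → ℝ) (hts : Tendsto ts atTop atTop)
    (μs : ℕ → ProbabilityMeasure X) (hμs : ∀ i, μs i ∈ Inv)
    (heq : ∀ i, h (μs i) + ts i * χ (μs i) = P (ts i))
    (μ : ProbabilityMeasure X) (hcl : MapClusterPt μ atTop μs) :
    μ ∈ Inv ∧ ∀ ν ∈ Inv, χ ν ≤ χ μ := by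
  subst hInv
  have hμ : μ ∈ {μ : ProbabilityMeasure X | (μ : Measure X).map T = μ} :=
    (isClosed_setOf_map_eq_self hT).mem_of_mapClusterPt hcl (.of_forall hμs)
  have hχ_usc := upperSemicontinuousOn_lyapunov hT.measurable hcont hpos hsub hχ μ hμ
  refine ⟨hμ, fun ν hν => ?_⟩
  obtain ⟨B, hB⟩ := hbdd
  refine hcl.le_of_upperSemicontinuousWithinAt hμs hχ_usc
    ((tendsto_const_nhds (x := B - h ν)).div_atTop hts) ?_
  filter_upwards [hts.eventually_gt_atTop 0] with i hi
  have hP : h ν + ts i * χ ν ≤ h (μs i) + ts i * χ (μs i) :=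
    heq i ▸ (hvar (ts i)).1 ⟨ν, hν, rfl⟩
  rw [← sub_le_iff_le_add', le_div_iff₀ hi]
  linarith [hB _ (hμs i)]

/-- Zero temperature limits: accumulation points of equilibrium states for `t_iΦ` with
`t_i → ∞` are Lyapunov maximizing measures for the subadditive potential `Φ`. -/
theorem zero_temperature_limit_maximizing
    {X : Type*} [MetricSpace X] [CompactSpace X] [MeasurableSpace X] [BorelSpace X]
    (T : X → X) (hT : Continuous T)
    (φ : ℕ → X → ℝ)
    (hcont : ∀ n, Continuous (φ n))
    (hpos : ∀ n x, 0 < φ n x)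
    (hsub : ∀ m n : ℕ, 1 ≤ m → 1 ≤ n → ∀ x, φ (n + m) x ≤ φ n x * φ m (T^[n] x))
    (Inv : Set (ProbabilityMeasure X))
    (hInv : Inv = {μ : ProbabilityMeasure X | (μ : Measure X).map T = (μ : Measure X)})
    -- the Lyapunov exponent functional `χ(·,Φ)`
    (χ : ProbabilityMeasure X → ℝ)
    (hχ : ∀ μ ∈ Inv,
      Tendsto (fun n : ℕ => (∫ x, Real.log (φ n x) ∂(μ : Measure X)) / n)
        atTop (nhds (χ μ)))
    -- the entropy map, upper semicontinuous and bounded (finite topological entropy)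
    (h : ProbabilityMeasure X → ℝ)
    (husc : UpperSemicontinuousOn h Inv)
    (hbdd : ∃ B : ℝ, ∀ μ ∈ Inv, h μ ≤ B)
    -- the subadditive pressure, given by the Cao–Feng–Huang variational principle
    (P : ℝ → ℝ)
    (hvar : ∀ t : ℝ, IsLUB {y : ℝ | ∃ μ ∈ Inv, y = h μ + t * χ μ} (P t))
    -- equilibrium states for `t_iΦ` with `t_i → ∞`
    (ts : ℕ → ℝ) (hts : Tendsto ts atTop atTop)
    (μs : ℕ → ProbabilityMeasure X) (hμs : ∀ i, μs i ∈ Inv)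
    (heq : ∀ i, h (μs i) + ts i * χ (μs i) = P (ts i))
    (μ : ProbabilityMeasure X) (hcl : MapClusterPt μ atTop μs) :
    μ ∈ Inv ∧ ∀ ν ∈ Inv, χ ν ≤ χ μ :=
  zero_temperature_limit_maximizing_general T hT φ hcont hpos hsub Inv hInv χ hχ h hbdd P hvar ts
    hts μs hμs heq μ hcl
end
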